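/- arXiv:1901.07470 — 6 statements merged into one kernel-verified Lean document; each statement's English description precedes it below -/
import Mathlib

section
/- (Uniqueness of the Cauchy problem for KdV; Lemma 6.6 of the paper.) Let t0 be a real number and let v1, v2 : ℝ × ℝ → ℝ (written v(x,t)) be such that for every t ≥ t0 the functions x ↦ vj(x,t) are three times continuously differentiable, for every x the functions t ↦ vj(x,t) are differentiable on [t0, ∞), and both satisfy the KdV equation ∂t vj + vj ∂x vj + (1/12) ∂x³ vj = 0 for all x ∈ ℝ and all t ≥ t0, with the same initial data v1(x,t0) = v2(x,t0) for all x ∈ ℝ. Set ω = v1 − v2 and assume: (i) for every t ≥ t0, ω(x,t) → 0, ∂x ω(x,t) → 0, and ω(x,t)·∂x² ω(x,t) → 0 as x → ±∞; (ii) for every t ≥ t0 the function x ↦ ω(x,t)² is integrable on ℝ; (iii) for every T > t0, sup over t ∈ [t0,T] of sup over x ∈ ℝ of |∂x v1(x,t)| is finite; (iv) (regularity permitting differentiation under the integral sign) the function q(t) = ∫_ℝ ω(x,t)² dx is differentiable on [t0,∞) with q'(t) = ∫_ℝ 2 ω(x,t) ∂t ω(x,t) dx, and for every t ≥ t0 the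 functions x ↦ ω ∂t ω, x ↦ ω ∂x³ ω and x ↦ ω² ∂x ω are integrable on ℝ. Then v1(x,t) = v2(x,t) for all x ∈ ℝ and all t ≥ t0. -/
/-!
Let `ω = v₁ - v₂` and `q(t) = ∫ ω(x,t)² dx`. Subtracting the two equations, `2 ω ∂ₜω` equals
`-∂ₓΦ - ω² ∂ₓv₁` for the flux `Φ = v₁ω² - (2/3)ω³ + (1/6)ω∂ₓ²ω - (1/12)(∂ₓω)²`. As `∂ₓΦ` is
integrable, `Φ` has limits at `±∞`. The decay hypotheses kill every term of `Φ` except `v₁ω²`,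
and since `v₁` grows at most linearly (its `x`-derivative is bounded) while `ω²` is integrable,
the limit of `v₁ω²` vanishes too: otherwise `ω² ≳ 1/|x|`. Hence `q' = -∫ ω² ∂ₓv₁`, so
`|q'| ≤ M q` on `[t₀, T]`, and Grönwall's inequality with `q(t₀) = 0` gives `q ≡ 0`, hence
`ω ≡ 0` by continuity.
-/

open MeasureTheory Filter Set Asymptotics Topology

theorem not_integrableAtFilter_of_inv_isBigO {l : Filter ℝ} [NeBot l] [TendstoIxxClass Icc l l]
    (hl : l ≤ cocompact ℝ) {g : ℝ → ℝ} (hg : (fun x => x⁻¹) =O[l] g) :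
    ¬IntegrableAtFilter g l := by
  rintro ⟨s, hs, hgs⟩
  have hne : ∀ᶠ x in l, x ≠ 0 := hl isCompact_singleton.compl_mem_cocompact
  have hlog : ∀ᶠ x in l, HasDerivAt Real.log x⁻¹ x := hne.mono fun x hx => Real.hasDerivAt_log hx
  have hlog_inf : Tendsto (fun x => ‖Real.log x‖) l atTop := by
    simpa [Function.comp_def, Real.log_abs] using tendsto_norm_atTop_atTop.comp
      (Real.tendsto_log_atTop.comp (tendsto_norm_cocompact_atTop.mono_left hl))
  exact not_integrableOn_of_tendsto_norm_atTop_of_deriv_isBigO_filter l hs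
    (hlog.mono fun x hx => hx.differentiableAt) hlog_inf
    ((EventuallyEq.isBigO (hlog.mono fun x hx => hx.deriv)).trans hg) hgs

theorem eq_zero_of_tendsto_mul_of_isBigO_id {l : Filter ℝ} [NeBot l] [TendstoIxxClass Icc l l]
    (hl : l ≤ cocompact ℝ) {u g : ℝ → ℝ} {L : ℝ} (hu : u =O[l] id)
    (hg : IntegrableAtFilter g l) (h : Tendsto (fun x => u x * g x) l (𝓝 L)) : L = 0 := by
  by_contra hL
  refine not_integrableAtFilter_of_inv_isBigO hl ?_ hg
  have hone : (fun _ => (1 : ℝ)) =O[l] fun x => u x * g x :=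
    (isBigO_const_left_iff_pos_le_norm one_ne_zero).2 ⟨‖L‖ / 2, by positivity,
      h.norm.eventually (eventually_ge_nhds (half_lt_self (norm_pos_iff.2 hL)))⟩
  refine ((isBigO_refl (fun x : ℝ => x⁻¹) l).mul (hone.trans (hu.mul (isBigO_refl g l)))).congr'
    (by simp) ?_
  have hne : ∀ᶠ x in l, x ≠ 0 := hl isCompact_singleton.compl_mem_cocompact
  filter_upwards [hne] with x hx
  exact inv_mul_cancel_left₀ hx (g x)

theorem isBigO_id_of_abs_deriv_le {l : Filter ℝ} (hl : l ≤ cocompact ℝ) {u : ℝ → ℝ} {M : ℝ}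
    (hu : Differentiable ℝ u) (hM : ∀ x, |deriv u x| ≤ M) : u =O[l] id := by
  have hlip : (fun x => u x - u 0) =O[l] id := IsBigO.of_bound M <| Eventually.of_forall fun x => by
    simpa using convex_univ.norm_image_sub_le_of_norm_deriv_le (fun y _ => hu y)
      (fun y _ => hM y) (mem_univ 0) (mem_univ x)
  have hconst : (fun _ => u 0) =O[l] id := (isBigO_const_one ℝ (u 0) l).trans <|
    (isBigO_const_left_iff_pos_le_norm one_ne_zero).2
      ⟨1, one_pos, (tendsto_norm_cocompact_atTop.mono_left hl).eventually_ge_atTop 1⟩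
  simpa using hlip.add hconst

theorem Continuous.eq_zero_of_integral_sq_eq_zero {X : Type*} [TopologicalSpace X]
    [MeasurableSpace X] [OpensMeasurableSpace X] {μ : Measure X} [μ.IsOpenPosMeasure]
    {φ : X → ℝ} (hφ : Continuous φ) (hint : Integrable (fun x => φ x ^ 2) μ)
    (h : ∫ x, φ x ^ 2 ∂μ = 0) : φ = 0 := by
  have hae := (integral_eq_zero_iff_of_nonneg (fun x => sq_nonneg (φ x)) hint).1 h
  have hsq := ((hφ.pow 2).ae_eq_iff_eq μ continuous_zero).1 hae
  funext x
  simpa using congrFun hsq x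

theorem norm_integral_sq_mul_le {X : Type*} [MeasurableSpace X] {μ : Measure X} {f g : X → ℝ}
    {M : ℝ} (hsq : Integrable (fun x => f x ^ 2) μ) (hg : ∀ x, |g x| ≤ M) :
    ‖∫ x, f x ^ 2 * g x ∂μ‖ ≤ M * ‖∫ x, f x ^ 2 ∂μ‖ := by
  rw [Real.norm_of_nonneg (integral_nonneg fun x => sq_nonneg (f x)), ← integral_const_mul]
  refine norm_integral_le_of_norm_le (hsq.const_mul M) (ae_of_all _ fun x => ?_)
  rw [norm_mul, Real.norm_of_nonneg (sq_nonneg _), Real.norm_eq_abs, mul_comm]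
  exact mul_le_mul_of_nonneg_right (hg x) (sq_nonneg _)

theorem ContDiff.hasDerivAt_iteratedDeriv {f : ℝ → ℝ} {n : WithTop ℕ∞} {m : ℕ}
    (hf : ContDiff ℝ n f) (hm : m < n) (x : ℝ) :
    HasDerivAt (iteratedDeriv m f) (iteratedDeriv (m + 1) f x) x := by
  rw [iteratedDeriv_succ]
  exact (hf.differentiable_iteratedDeriv m hm x).hasDerivAt

noncomputable def kdvDiffRhs (u f : ℝ → ℝ) (x : ℝ) : ℝ :=
  -(u x * deriv f x + f x * deriv u x - f x * deriv f x) - 1 / 12 * iteratedDeriv 3 f x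

theorem sub_eq_kdvDiffRhs {u w : ℝ → ℝ} {x ut wt : ℝ} (hu : ContDiff ℝ 3 u)
    (hw : ContDiff ℝ 3 w)
    (hu_kdv : ut + u x * deriv u x + 1 / 12 * iteratedDeriv 3 u x = 0)
    (hw_kdv : wt + w x * deriv w x + 1 / 12 * iteratedDeriv 3 w x = 0) :
    ut - wt = kdvDiffRhs u (fun y => u y - w y) x := by
  rw [kdvDiffRhs,
    deriv_fun_sub (hu.differentiable (by norm_num) x) (hw.differentiable (by norm_num) x),
    iteratedDeriv_fun_sub hu.contDiffAt hw.contDiffAt]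
  linear_combination hu_kdv - hw_kdv

noncomputable def kdvFlux (u f : ℝ → ℝ) (x : ℝ) : ℝ :=
  u x * f x ^ 2 - 2 / 3 * f x ^ 3 + 1 / 6 * (f x * iteratedDeriv 2 f x) - 1 / 12 * deriv f x ^ 2

theorem hasDerivAt_kdvFlux {u f : ℝ → ℝ} {x : ℝ} (hf : ContDiff ℝ 3 f)
    (hu : DifferentiableAt ℝ u x) :
    HasDerivAt (kdvFlux u f) (-(2 * f x * kdvDiffRhs u f x + f x ^ 2 * deriv u x)) x := by
  have h0 := hf.hasDerivAt_iteratedDeriv (m := 0) (by norm_num) x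
  have h1 := hf.hasDerivAt_iteratedDeriv (m := 1) (by norm_num) x
  have h2 := hf.hasDerivAt_iteratedDeriv (m := 2) (by norm_num) x
  simp only [iteratedDeriv_zero, iteratedDeriv_one, zero_add] at h0 h1
  have hflux : HasDerivAt (kdvFlux u f) _ x :=
    (((hu.hasDerivAt.mul (h0.pow 2)).sub ((h0.pow 3).const_mul (2 / 3))).add
      ((h0.mul h2).const_mul (1 / 6))).sub ((h1.pow 2).const_mul (1 / 12))
  convert hflux using 1
  simp only [kdvDiffRhs, Pi.pow_apply]
  norm_num
  ring

theorem eq_zero_of_tendsto_kdvFlux {l : Filter ℝ} [NeBot l] [TendstoIxxClass Icc l l]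
    (hl : l ≤ cocompact ℝ) {u f : ℝ → ℝ} {L : ℝ} (hu : u =O[l] id)
    (hf0 : Tendsto f l (𝓝 0)) (hf1 : Tendsto (deriv f) l (𝓝 0))
    (hf2 : Tendsto (fun x => f x * iteratedDeriv 2 f x) l (𝓝 0))
    (hsq : IntegrableAtFilter (fun x => f x ^ 2) l) (h : Tendsto (kdvFlux u f) l (𝓝 L)) :
    L = 0 := by
  refine eq_zero_of_tendsto_mul_of_isBigO_id hl hu hsq ?_
  have hrest : Tendsto (fun x => 2 / 3 * f x ^ 3 - 1 / 6 * (f x * iteratedDeriv 2 f x)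
      + 1 / 12 * deriv f x ^ 2) l (𝓝 0) := by
    convert (((hf0.pow 3).const_mul (2 / 3)).sub (hf2.const_mul (1 / 6))).add
      ((hf1.pow 2).const_mul (1 / 12)) using 2
    norm_num
  convert h.add hrest using 2 with x
  · simp only [kdvFlux]; ring
  · simp

theorem integral_mul_kdvDiffRhs {u f : ℝ → ℝ} {M : ℝ} (hf : ContDiff ℝ 3 f)
    (hu : Differentiable ℝ u) (hM : ∀ x, |deriv u x| ≤ M)
    (hf0 : Tendsto f (cocompact ℝ) (𝓝 0)) (hf1 : Tendsto (deriv f) (cocompact ℝ) (𝓝 0))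
    (hf2 : Tendsto (fun x => f x * iteratedDeriv 2 f x) (cocompact ℝ) (𝓝 0))
    (hsq : Integrable (fun x => f x ^ 2))
    (hrhs : Integrable (fun x => f x * kdvDiffRhs u f x)) :
    ∫ x, 2 * f x * kdvDiffRhs u f x = -∫ x, f x ^ 2 * deriv u x := by
  have hP : Integrable (fun x => f x ^ 2 * deriv u x) :=
    hsq.mul_bdd (measurable_deriv u).aestronglyMeasurable (ae_of_all _ hM)
  have h2rhs : Integrable (fun x => 2 * f x * kdvDiffRhs u f x) := by
    simpa only [mul_assoc] using hrhs.const_mul 2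
  have hflux := fun x => hasDerivAt_kdvFlux hf (hu x)
  have hlim {l : Filter ℝ} [NeBot l] [TendstoIxxClass Icc l l] (hl : l ≤ cocompact ℝ)
      (h : Tendsto (kdvFlux u f) l (𝓝 (limUnder l (kdvFlux u f)))) :
      Tendsto (kdvFlux u f) l (𝓝 0) :=
    eq_zero_of_tendsto_kdvFlux hl (isBigO_id_of_abs_deriv_le hl hu hM) (hf0.mono_left hl)
      (hf1.mono_left hl) (hf2.mono_left hl) (hsq.integrableAtFilter l) h ▸ h
  have hint : Integrable (fun x => -(2 * f x * kdvDiffRhs u f x + f x ^ 2 * deriv u x)) :=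
    (h2rhs.add hP).neg
  have hFTC := integral_of_hasDerivAt_of_tendsto hflux hint
    (hlim atBot_le_cocompact <| tendsto_limUnder_of_hasDerivAt_of_integrableOn_Iic (a := 0)
      (fun x _ => hflux x) hint.integrableOn)
    (hlim atTop_le_cocompact <| tendsto_limUnder_of_hasDerivAt_of_integrableOn_Ioi (a := 0)
      (fun x _ => hflux x) hint.integrableOn)
  rw [integral_neg, integral_add h2rhs hP] at hFTC
  linarith

theorem kdv_cauchy_uniqueness_general
    (t0 : ℝ) (v1 v2 ω : ℝ → ℝ → ℝ)
    (hω : ∀ x t : ℝ, ω x t = v1 x t - v2 x t)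
    (hx1 : ∀ t ≥ t0, ContDiff ℝ 3 (fun x => v1 x t))
    (hx2 : ∀ t ≥ t0, ContDiff ℝ 3 (fun x => v2 x t))
    (ht1 : ∀ x : ℝ, DifferentiableOn ℝ (fun t => v1 x t) (Ici t0))
    (ht2 : ∀ x : ℝ, DifferentiableOn ℝ (fun t => v2 x t) (Ici t0))
    (hkdv1 : ∀ x : ℝ, ∀ t ≥ t0,
      derivWithin (fun s => v1 x s) (Ici t0) t
        + v1 x t * deriv (fun y => v1 y t) x
        + (1 / 12) * iteratedDeriv 3 (fun y => v1 y t) x = 0)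
    (hkdv2 : ∀ x : ℝ, ∀ t ≥ t0,
      derivWithin (fun s => v2 x s) (Ici t0) t
        + v2 x t * deriv (fun y => v2 y t) x
        + (1 / 12) * iteratedDeriv 3 (fun y => v2 y t) x = 0)
    (hinit : ∀ x : ℝ, v1 x t0 = v2 x t0)
    (hlim0 : ∀ t ≥ t0, Tendsto (fun x => ω x t) atTop (nhds 0) ∧
      Tendsto (fun x => ω x t) atBot (nhds 0))
    (hlim1 : ∀ t ≥ t0, Tendsto (fun x => deriv (fun y => ω y t) x) atTop (nhds 0) ∧
      Tendsto (fun x => deriv (fun y => ω y t) x) atBot (nhds 0))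
    (hlim2 : ∀ t ≥ t0,
      Tendsto (fun x => ω x t * iteratedDeriv 2 (fun y => ω y t) x) atTop (nhds 0) ∧
      Tendsto (fun x => ω x t * iteratedDeriv 2 (fun y => ω y t) x) atBot (nhds 0))
    (hL2 : ∀ t ≥ t0, Integrable (fun x => (ω x t) ^ 2))
    (hbdd : ∀ T > t0, ∃ M : ℝ, ∀ t ∈ Icc t0 T, ∀ x : ℝ,
      |deriv (fun y => v1 y t) x| ≤ M)
    (hq : ∀ t ≥ t0, HasDerivWithinAt (fun s => ∫ x : ℝ, (ω x s) ^ 2)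
      (∫ x : ℝ, 2 * ω x t * derivWithin (fun s => ω x s) (Ici t0) t) (Ici t0) t)
    (hint1 : ∀ t ≥ t0,
      Integrable (fun x => ω x t * derivWithin (fun s => ω x s) (Ici t0) t)) :
    ∀ x : ℝ, ∀ t ≥ t0, v1 x t = v2 x t := by
  obtain rfl : ω = fun x t => v1 x t - v2 x t := funext₂ hω
  have hcocompact {φ : ℝ → ℝ} (h : Tendsto φ atTop (𝓝 0) ∧ Tendsto φ atBot (𝓝 0)) :
      Tendsto φ (cocompact ℝ) (𝓝 0) := by
    rw [cocompact_eq_atBot_atTop]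
    exact tendsto_sup.2 h.symm
  have hrhs : ∀ t ≥ t0, ∀ x, derivWithin (fun s => v1 x s - v2 x s) (Ici t0) t =
      kdvDiffRhs (fun y => v1 y t) (fun y => v1 y t - v2 y t) x := fun t ht x => by
    rw [derivWithin_fun_sub (ht1 x t ht) (ht2 x t ht)]
    exact sub_eq_kdvDiffRhs (hx1 t ht) (hx2 t ht) (hkdv1 x t ht) (hkdv2 x t ht)
  have hq_zero : ∀ T > t0, ∀ t ∈ Icc t0 T, ∫ x, (v1 x t - v2 x t) ^ 2 = 0 := by
    intro T hT
    obtain ⟨M, hM⟩ := hbdd T hT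
    refine eq_zero_of_abs_deriv_le_mul_abs_self_of_eq_zero_right (K := M)
      (fun t ht => (hq t ht.1).continuousWithinAt.mono Icc_subset_Ici_self)
      (fun t ht => (hq t ht.1).mono (Ici_subset_Ici.2 ht.1)) (by simp [hinit]) fun t ht => ?_
    have ht0 : t ≥ t0 := ht.1
    simp_rw [hrhs t ht0]
    rw [integral_mul_kdvDiffRhs ((hx1 t ht0).sub (hx2 t ht0))
      ((hx1 t ht0).differentiable (by norm_num)) (hM t (Ico_subset_Icc_self ht))
      (hcocompact (hlim0 t ht0)) (hcocompact (hlim1 t ht0)) (hcocompact (hlim2 t ht0))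
      (hL2 t ht0) (by simpa only [hrhs t ht0] using hint1 t ht0), norm_neg]
    exact norm_integral_sq_mul_le (hL2 t ht0) (hM t (Ico_subset_Icc_self ht))
  intro x t ht
  have hsq := hq_zero (t + 1) (by linarith) t ⟨ht, by linarith⟩
  exact sub_eq_zero.1 (congrFun (((hx1 t ht).continuous.sub (hx2 t ht).continuous
    ).eq_zero_of_integral_sq_eq_zero (hL2 t ht) hsq) x)

/-- Uniqueness of the Cauchy problem for the KdV equation
`v_t + v v_x + (1/12) v_xxx = 0` (Lemma 6.6). -/
theorem kdv_cauchy_uniqueness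
    (t0 : ℝ) (v1 v2 ω : ℝ → ℝ → ℝ)
    (hω : ∀ x t : ℝ, ω x t = v1 x t - v2 x t)
    (hx1 : ∀ t ≥ t0, ContDiff ℝ 3 (fun x => v1 x t))
    (hx2 : ∀ t ≥ t0, ContDiff ℝ 3 (fun x => v2 x t))
    (ht1 : ∀ x : ℝ, DifferentiableOn ℝ (fun t => v1 x t) (Ici t0))
    (ht2 : ∀ x : ℝ, DifferentiableOn ℝ (fun t => v2 x t) (Ici t0))
    (hkdv1 : ∀ x : ℝ, ∀ t ≥ t0,
      derivWithin (fun s => v1 x s) (Ici t0) t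
        + v1 x t * deriv (fun y => v1 y t) x
        + (1 / 12) * iteratedDeriv 3 (fun y => v1 y t) x = 0)
    (hkdv2 : ∀ x : ℝ, ∀ t ≥ t0,
      derivWithin (fun s => v2 x s) (Ici t0) t
        + v2 x t * deriv (fun y => v2 y t) x
        + (1 / 12) * iteratedDeriv 3 (fun y => v2 y t) x = 0)
    (hinit : ∀ x : ℝ, v1 x t0 = v2 x t0)
    (hlim0 : ∀ t ≥ t0, Tendsto (fun x => ω x t) atTop (nhds 0) ∧
      Tendsto (fun x => ω x t) atBot (nhds 0))
    (hlim1 : ∀ t ≥ t0, Tendsto (fun x => deriv (fun y => ω y t) x) atTop (nhds 0) ∧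
      Tendsto (fun x => deriv (fun y => ω y t) x) atBot (nhds 0))
    (hlim2 : ∀ t ≥ t0,
      Tendsto (fun x => ω x t * iteratedDeriv 2 (fun y => ω y t) x) atTop (nhds 0) ∧
      Tendsto (fun x => ω x t * iteratedDeriv 2 (fun y => ω y t) x) atBot (nhds 0))
    (hL2 : ∀ t ≥ t0, Integrable (fun x => (ω x t) ^ 2))
    (hbdd : ∀ T > t0, ∃ M : ℝ, ∀ t ∈ Icc t0 T, ∀ x : ℝ,
      |deriv (fun y => v1 y t) x| ≤ M)
    (hq : ∀ t ≥ t0, HasDerivWithinAt (fun s => ∫ x : ℝ, (ω x s) ^ 2)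
      (∫ x : ℝ, 2 * ω x t * derivWithin (fun s => ω x s) (Ici t0) t) (Ici t0) t)
    (hint1 : ∀ t ≥ t0,
      Integrable (fun x => ω x t * derivWithin (fun s => ω x s) (Ici t0) t))
    (hint2 : ∀ t ≥ t0,
      Integrable (fun x => ω x t * iteratedDeriv 3 (fun y => ω y t) x))
    (hint3 : ∀ t ≥ t0,
      Integrable (fun x => (ω x t) ^ 2 * deriv (fun y => ω y t) x)) :
    ∀ x : ℝ, ∀ t ≥ t0, v1 x t = v2 x t :=
  kdv_cauchy_uniqueness_general t0 v1 v2 ω hω hx1 hx2 ht1 ht2 hkdv1 hkdv2 hinit hlim0 hlim1 hlim2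
    hL2 hbdd hq hint1
end

section
/- (Proposition 6.5 of the paper: vanishing of an entire function with one-sided super-exponential bound.) Let c7 > 0 and c5, c3, c1 ∈ ℝ, and define θ(μ) = c7 μ^{7/2} + c5 μ^{5/2} + c3 μ^{3/2} + c1 μ^{1/2} for μ ∈ ℂ ∖ (−∞,0], using principal branches of the half-integer powers. If f : ℂ → ℂ is entire and there exist constants C > 0 and R ≥ 1 such that |f(μ)| ≤ C |μ|^{−3/4} exp(Re θ(μ)) for every μ ∉ (−∞,0] with |μ| ≥ R, then f is identically zero. -/
open Complex Set Filter Topology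
open scoped Real

/-!
Put `μ = z²`. On the closed right half-plane `‖f (z²)‖ ≤ C exp (c7 Re z⁷ + O(‖z‖⁵))`, and since
`z ↦ f (z²)` is even, on the closed left half-plane the same holds with `-c7 Re z⁷`. Let
`rot = exp (iπ/7)`, so that `(rotᵏ z)⁷ = (-1)ᵏ z⁷`. For `z` in the sector `0 ≤ arg z ≤ π/7`,
choosing for each `k < 7` a half-plane containing `rotᵏ z`, the order-7 terms in the bounds for
the factors of `∏_{k<7} f ((rotᵏ z)²)` add up to `-c7 ‖z‖⁷ |cos (7 arg z)|`. The product is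
invariant under `z ↦ rot z`, bounded on the edges of the sector and of order 5 < 7 inside it, so
by Phragmén–Lindelöf it is bounded, hence constant, hence zero since it decays along `ℝ₊`.
Entire functions have no zero divisors, so some factor `f ((rotᵏ z)²)`, and therefore `f`,
vanishes identically.
-/

namespace EntireVanishing

lemma sq_cpow_div_two {z : ℂ} (hz : 0 < z.re) (w : ℂ) : (z ^ 2) ^ (w / 2) = z ^ w := by
  have harg := abs_lt.1 (abs_arg_lt_pi_div_two_iff.2 (Or.inl hz))
  rw [← cpow_ofNat, ← cpow_mul _ (by simp [log_im]; linarith) (by simp [log_im]; linarith)]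
  ring_nf

lemma sq_mem_slitPlane {z : ℂ} (hz : 0 < z.re) : z ^ 2 ∈ slitPlane := by
  rw [mem_slitPlane_iff, sq, mul_re, mul_im]
  rcases eq_or_ne z.im 0 with h | h
  · left
    simp [h, hz]
  · right
    rw [show z.re * z.im + z.im * z.re = 2 * z.re * z.im by ring]
    exact mul_ne_zero (mul_ne_zero two_ne_zero hz.ne') h

lemma norm_lower_order_terms_le (c5 c3 c1 : ℝ) {z : ℂ} (hz : 1 ≤ ‖z‖) :
    ‖(c5 : ℂ) * z ^ 5 + (c3 : ℂ) * z ^ 3 + (c1 : ℂ) * z‖ ≤ (|c5| + |c3| + |c1|) * ‖z‖ ^ 5 := by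
  have h3 : ‖z‖ ^ 3 ≤ ‖z‖ ^ 5 := pow_le_pow_right₀ hz (by norm_num)
  have h1 : ‖z‖ ≤ ‖z‖ ^ 5 := le_self_pow₀ hz (by norm_num)
  calc _ ≤ ‖(c5 : ℂ) * z ^ 5‖ + ‖(c3 : ℂ) * z ^ 3‖ + ‖(c1 : ℂ) * z‖ := norm_add₃_le
    _ = |c5| * ‖z‖ ^ 5 + |c3| * ‖z‖ ^ 3 + |c1| * ‖z‖ := by simp [norm_pow]
    _ ≤ _ := by
      rw [add_mul, add_mul]
      gcongr

lemma le_of_forall_re_pos_le {u v : ℂ → ℝ} (hu : Continuous u) (hv : Continuous v) {R : ℝ}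
    (h : ∀ z, 0 < z.re → R ≤ ‖z‖ → u z ≤ v z) {z : ℂ} (hz : 0 ≤ z.re) (hR : R ≤ ‖z‖) :
    u z ≤ v z := by
  have hlim : Tendsto (fun t : ℝ => z + t) (𝓝[>] 0) (𝓝 z) := by
    refine Tendsto.mono_left ?_ nhdsWithin_le_nhds
    exact Continuous.tendsto' (by fun_prop) _ _ (by simp)
  refine le_of_tendsto_of_tendsto ((hu.tendsto z).comp hlim) ((hv.tendsto z).comp hlim) ?_
  filter_upwards [self_mem_nhdsWithin] with t (ht : 0 < t)
  have hnorm : ‖z‖ ≤ ‖z + t‖ := by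
    rw [← sq_le_sq₀ (norm_nonneg _) (norm_nonneg _), Complex.sq_norm, Complex.sq_norm,
      normSq_apply, normSq_apply]
    simp only [add_re, ofReal_re, add_im, ofReal_im, add_zero]
    nlinarith
  exact h _ (by simp; linarith) (hR.trans hnorm)

section RightHalfPlane

variable {c7 c5 c3 c1 C R : ℝ} {f : ℂ → ℂ}

lemma norm_comp_sq_le_of_re_pos (hR : 1 ≤ R)
    (hbound : ∀ μ : ℂ, μ ∉ (fun r : ℝ => (r : ℂ)) '' Iic 0 → R ≤ ‖μ‖ →
      ‖f μ‖ ≤ C * (‖μ‖) ^ (-(3 / 4) : ℝ) *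
        Real.exp (((c7 : ℂ) * μ ^ ((7 : ℂ) / 2) + (c5 : ℂ) * μ ^ ((5 : ℂ) / 2)
          + (c3 : ℂ) * μ ^ ((3 : ℂ) / 2) + (c1 : ℂ) * μ ^ ((1 : ℂ) / 2)).re))
    (hC : 0 ≤ C) {z : ℂ} (hz : 0 < z.re) (hzR : R ≤ ‖z‖) :
    ‖f (z ^ 2)‖ ≤ C * Real.exp (c7 * (z ^ 7).re + (|c5| + |c3| + |c1|) * ‖z‖ ^ 5) := by
  have hz1 : 1 ≤ ‖z‖ := hR.trans hzR
  have hnorm : R ≤ ‖z ^ 2‖ := by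
    rw [norm_pow]
    nlinarith
  have hcut : z ^ 2 ∉ (fun r : ℝ => (r : ℂ)) '' Iic 0 := by
    rintro ⟨x, hx, hxz⟩
    have hmem := sq_mem_slitPlane hz
    rw [← hxz, ofReal_mem_slitPlane] at hmem
    exact hmem.not_ge hx
  have hpow : ‖z ^ 2‖ ^ (-(3 / 4) : ℝ) ≤ 1 :=
    Real.rpow_le_one_of_one_le_of_nonpos (hR.trans hnorm) (by norm_num)
  have hphase : ((c7 : ℂ) * z ^ 7 + (c5 : ℂ) * z ^ 5 + (c3 : ℂ) * z ^ 3 + (c1 : ℂ) * z).re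
      ≤ c7 * (z ^ 7).re + (|c5| + |c3| + |c1|) * ‖z‖ ^ 5 := by
    have := (re_le_norm _).trans (norm_lower_order_terms_le c5 c3 c1 hz1)
    simp only [add_re, re_ofReal_mul] at this ⊢
    linarith
  have h := hbound _ hcut hnorm
  simp only [sq_cpow_div_two hz, cpow_ofNat, cpow_one] at h
  calc ‖f (z ^ 2)‖ ≤ C * ‖z ^ 2‖ ^ (-(3 / 4) : ℝ) * Real.exp
        ((c7 : ℂ) * z ^ 7 + (c5 : ℂ) * z ^ 5 + (c3 : ℂ) * z ^ 3 + (c1 : ℂ) * z).re := h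
    _ ≤ C * 1 * Real.exp (c7 * (z ^ 7).re + (|c5| + |c3| + |c1|) * ‖z‖ ^ 5) := by
      gcongr
    _ = _ := by rw [mul_one]

lemma norm_comp_sq_le (hf : Continuous f) (hR : 1 ≤ R)
    (hbound : ∀ μ : ℂ, μ ∉ (fun r : ℝ => (r : ℂ)) '' Iic 0 → R ≤ ‖μ‖ →
      ‖f μ‖ ≤ C * (‖μ‖) ^ (-(3 / 4) : ℝ) *
        Real.exp (((c7 : ℂ) * μ ^ ((7 : ℂ) / 2) + (c5 : ℂ) * μ ^ ((5 : ℂ) / 2)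
          + (c3 : ℂ) * μ ^ ((3 : ℂ) / 2) + (c1 : ℂ) * μ ^ ((1 : ℂ) / 2)).re))
    (hC : 0 ≤ C) {z : ℂ} (hz : 0 ≤ z.re) (hzR : R ≤ ‖z‖) :
    ‖f (z ^ 2)‖ ≤ C * Real.exp (c7 * (z ^ 7).re + (|c5| + |c3| + |c1|) * ‖z‖ ^ 5) :=
  le_of_forall_re_pos_le (by fun_prop) (by fun_prop)
    (fun _ hw hwR => norm_comp_sq_le_of_re_pos hR hbound hC hw hwR) hz hzR

end RightHalfPlane

lemma norm_comp_sq_le_of_sign {f : ℂ → ℂ} {c7 E C R : ℝ}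
    (hright : ∀ z : ℂ, 0 ≤ z.re → R ≤ ‖z‖ →
      ‖f (z ^ 2)‖ ≤ C * Real.exp (c7 * (z ^ 7).re + E * ‖z‖ ^ 5))
    {s : ℝ} (hs : s = 1 ∨ s = -1) {w : ℂ} (hw : 0 ≤ s * w.re) (hR : R ≤ ‖w‖) :
    ‖f (w ^ 2)‖ ≤ C * Real.exp (s * (c7 * (w ^ 7).re) + E * ‖w‖ ^ 5) := by
  rcases hs with rfl | rfl
  · simpa using hright w (by simpa using hw) hR
  · simpa [Odd.neg_pow (by decide : Odd 7)] using
      hright (-w) (by simpa using hw) (by simpa using hR)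

noncomputable def rot : ℂ := exp (↑(π / 7) * I)

lemma rot_ne_zero : rot ≠ 0 := exp_ne_zero _

lemma rot_pow_seven : rot ^ 7 = -1 := by
  rw [rot, ← exp_nat_mul, show ((7 : ℕ) : ℂ) * (↑(π / 7) * I) = π * I by push_cast; ring,
    exp_pi_mul_I]

lemma rot_zpow_mul (n : ℤ) (r ψ : ℝ) :
    rot ^ n * (r * exp (ψ * I)) = r * exp (↑(ψ + n * π / 7) * I) := by
  rw [rot, ← exp_int_mul, mul_left_comm, ← exp_add]
  push_cast
  ring_nf

lemma apply_zpow_mul_eq {G₀ β : Type*} [GroupWithZero G₀] {F : G₀ → β} {u : G₀} (hu : u ≠ 0)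
    (h : ∀ z, F (u * z) = F z) (n : ℤ) (z : G₀) : F (u ^ n * z) = F z := by
  induction n using Int.induction_on with
  | zero => simp
  | succ n ih => rw [add_comm, zpow_one_add₀ hu, mul_assoc, h, ih]
  | pred n ih => rw [← ih, ← h, ← mul_assoc, ← zpow_one_add₀ hu]; ring_nf

lemma exists_rot_zpow_mul_eq (z : ℂ) :
    ∃ n : ℤ, ∃ ψ ∈ Icc 0 (π / 7), rot ^ n * z = ‖z‖ * exp (ψ * I) := by
  have hp : 0 < π / 7 := by positivity
  refine ⟨-toIcoDiv hp 0 (arg z), toIcoMod hp 0 (arg z), ?_, ?_⟩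
  · have := toIcoMod_mem_Ico hp 0 (arg z)
    simp only [zero_add] at this
    exact Ico_subset_Icc_self this
  · rw [← self_sub_toIcoDiv_zsmul hp, zsmul_eq_mul]
    calc rot ^ (-toIcoDiv hp 0 (arg z)) * z
        = rot ^ (-toIcoDiv hp 0 (arg z)) * (‖z‖ * exp (arg z * I)) := by
          rw [norm_mul_exp_arg_mul_I]
      _ = _ := by
          rw [rot_zpow_mul]
          push_cast
          ring_nf

noncomputable def rotProd (f : ℂ → ℂ) (z : ℂ) : ℂ :=
  ∏ k ∈ Finset.range 7, f ((rot ^ k * z) ^ 2)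

lemma rotProd_rot_mul (f : ℂ → ℂ) (z : ℂ) : rotProd f (rot * z) = rotProd f z := by
  have h7 : (rot ^ 7 * z) ^ 2 = (rot ^ 0 * z) ^ 2 := by rw [rot_pow_seven]; ring
  simp only [rotProd, ← mul_assoc, ← pow_succ]
  rw [Finset.prod_range_succ, h7, ← Finset.prod_range_succ' (fun k => f ((rot ^ k * z) ^ 2))]

lemma differentiable_rotProd {f : ℂ → ℂ} (hf : Differentiable ℂ f) :
    Differentiable ℂ (rotProd f) :=
  Differentiable.fun_finsetProd fun _ _ => by fun_prop

lemma exists_sign_cos {ψ : ℝ} (hψ : ψ ∈ Icc 0 (π / 7)) :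
    ∃ s : ℕ → ℝ, (∀ k, s k = 1 ∨ s k = -1) ∧
      (∀ k < 7, 0 ≤ s k * Real.cos (ψ + k * π / 7)) ∧
      (∑ k ∈ Finset.range 7, s k * (-1) ^ k) * Real.cos (7 * ψ) = -|Real.cos (7 * ψ)| := by
  obtain ⟨hψ0, hψ1⟩ := hψ
  have hπ := Real.pi_pos
  -- `s k = 1` exactly when `ψ + kπ/7 ≤ π/2`, i.e. when `rotᵏ e^{iψ}` is in the right half-plane.
  rcases le_total ψ (π / 14) with h | h
  · refine ⟨fun k => if k ≤ 3 then 1 else -1, fun k => by dsimp only; split_ifs <;> simp,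
      fun k hk => ?_, ?_⟩
    · have hk' : (k : ℝ) ≤ 6 := by exact_mod_cast Nat.le_of_lt_succ hk
      dsimp only
      split_ifs with h3
      · have : (k : ℝ) ≤ 3 := by exact_mod_cast h3
        rw [one_mul]
        exact Real.cos_nonneg_of_mem_Icc ⟨by nlinarith, by nlinarith⟩
      · have : (4 : ℝ) ≤ k := by exact_mod_cast (not_le.1 h3)
        rw [neg_one_mul, neg_nonneg]
        exact Real.cos_nonpos_of_pi_div_two_le_of_le (by nlinarith) (by nlinarith)
    · rw [abs_of_nonneg (Real.cos_nonneg_of_mem_Icc ⟨by linarith, by linarith⟩)]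
      norm_num [Finset.sum_range_succ]
  · refine ⟨fun k => if k ≤ 2 then 1 else -1, fun k => by dsimp only; split_ifs <;> simp,
      fun k hk => ?_, ?_⟩
    · have hk' : (k : ℝ) ≤ 6 := by exact_mod_cast Nat.le_of_lt_succ hk
      dsimp only
      split_ifs with h2
      · have : (k : ℝ) ≤ 2 := by exact_mod_cast h2
        rw [one_mul]
        exact Real.cos_nonneg_of_mem_Icc ⟨by nlinarith, by nlinarith⟩
      · have : (3 : ℝ) ≤ k := by exact_mod_cast (not_le.1 h2)
        rw [neg_one_mul, neg_nonneg]
        exact Real.cos_nonpos_of_pi_div_two_le_of_le (by nlinarith) (by nlinarith)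
    · rw [abs_of_nonpos (Real.cos_nonpos_of_pi_div_two_le_of_le (by linarith) (by linarith))]
      norm_num [Finset.sum_range_succ]

lemma norm_rotProd_le {f : ℂ → ℂ} {c7 E C R : ℝ}
    (hright : ∀ z : ℂ, 0 ≤ z.re → R ≤ ‖z‖ →
      ‖f (z ^ 2)‖ ≤ C * Real.exp (c7 * (z ^ 7).re + E * ‖z‖ ^ 5))
    {r ψ : ℝ} (hr0 : 0 ≤ r) (hr : R ≤ r) (hψ : ψ ∈ Icc 0 (π / 7)) :
    ‖rotProd f (r * exp (ψ * I))‖ ≤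
      C ^ 7 * Real.exp (-(c7 * r ^ 7 * |Real.cos (7 * ψ)|) + 7 * E * r ^ 5) := by
  obtain ⟨s, hs, hsign, hsum⟩ := exists_sign_cos hψ
  set z : ℂ := r * exp (ψ * I)
  have hz7 : (z ^ 7).re = r ^ 7 * Real.cos (7 * ψ) := by
    rw [mul_pow, ← exp_nat_mul, ← ofReal_pow, re_ofReal_mul, ← mul_assoc,
      show ((7 : ℕ) : ℂ) * ψ = ↑(7 * ψ) by push_cast; ring, exp_ofReal_mul_I_re]
  have hfactor : ∀ k ∈ Finset.range 7, ‖f ((rot ^ k * z) ^ 2)‖ ≤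
      C * Real.exp (s k * (-1) ^ k * Real.cos (7 * ψ) * (c7 * r ^ 7) + E * r ^ 5) := by
    intro k hk
    have hpolar : rot ^ k * z = r * exp (↑(ψ + k * π / 7) * I) := by
      simpa using rot_zpow_mul k r ψ
    have hre : (rot ^ k * z).re = r * Real.cos (ψ + k * π / 7) := by
      rw [hpolar, re_ofReal_mul, exp_ofReal_mul_I_re]
    have hnorm : ‖rot ^ k * z‖ = r := by
      rw [hpolar, norm_mul, norm_exp_ofReal_mul_I, norm_real, Real.norm_of_nonneg hr0, mul_one]
    have hpow : ((rot ^ k * z) ^ 7).re = (-1) ^ k * (z ^ 7).re := by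
      rw [mul_pow, ← pow_mul, mul_comm k, pow_mul, rot_pow_seven, ← ofReal_one, ← ofReal_neg,
        ← ofReal_pow, re_ofReal_mul]
    refine (norm_comp_sq_le_of_sign hright (hs k) ?_ (hnorm ▸ hr)).trans_eq ?_
    · rw [hre, mul_left_comm]
      exact mul_nonneg hr0 (hsign k (Finset.mem_range.1 hk))
    · rw [hpow, hz7, hnorm]
      ring_nf
  calc ‖rotProd f z‖ = ∏ k ∈ Finset.range 7, ‖f ((rot ^ k * z) ^ 2)‖ := norm_prod _ _
    _ ≤ ∏ k ∈ Finset.range 7,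
        C * Real.exp (s k * (-1) ^ k * Real.cos (7 * ψ) * (c7 * r ^ 7) + E * r ^ 5) :=
      Finset.prod_le_prod (fun _ _ => norm_nonneg _) hfactor
    _ = _ := by
      rw [Finset.prod_mul_distrib, Finset.prod_const, Finset.card_range, ← Real.exp_sum,
        Finset.sum_add_distrib, ← Finset.sum_mul, ← Finset.sum_mul, hsum]
      simp only [Finset.sum_const, Finset.card_range, nsmul_eq_mul]
      ring_nf

lemma cpow_ofReal_eq_polar (w : ℂ) (y : ℝ) :
    w ^ (y : ℂ) = ↑(‖w‖ ^ y) * exp (↑(arg w * y) * I) := by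
  rw [cpow_ofReal, exp_mul_I, ← ofReal_cos, ← ofReal_sin]

lemma arg_ofReal_mul_exp_mul_I {r θ : ℝ} (hr : 0 < r) (hθ : θ ∈ Ioc (-π) π) :
    arg (r * exp (θ * I)) = θ := by
  rw [exp_mul_I, arg_mul_cos_add_sin_mul_I hr hθ]

lemma norm_ofReal_mul_exp_mul_I {r : ℝ} (hr : 0 ≤ r) (θ : ℝ) : ‖(r : ℂ) * exp (θ * I)‖ = r := by
  rw [norm_mul, norm_exp_ofReal_mul_I, norm_real, Real.norm_of_nonneg hr, mul_one]

lemma diffContOnCl_comp_cpow {F : ℂ → ℂ} (hF : Differentiable ℂ F) {β : ℝ} (hβ : 0 < β) :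
    DiffContOnCl ℂ (fun w => F (w ^ (β : ℂ))) (Ioi 0 ×ℂ Ioi 0) := by
  refine ⟨fun w hw => ?_, fun w hw => ?_⟩
  · rw [mem_reProdIm] at hw
    exact ((hF _).comp w (differentiableAt_id.cpow_const
      (mem_slitPlane_iff.2 (Or.inl hw.1)))).differentiableWithinAt
  · rw [closure_reProdIm, closure_Ioi, mem_reProdIm] at hw
    exact ((hF _).continuousAt.comp (continuousAt_cpow_const_of_re_pos (Or.inl hw.1)
      (by simpa using hβ))).continuousWithinAt

lemma exists_cpow_eq_of_mem_sector {β r ψ : ℝ} (hβ : 0 < β) (hr : 0 ≤ r)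
    (hψ : ψ ∈ Icc 0 (π / 2 * β)) :
    ∃ w : ℂ, 0 ≤ w.re ∧ 0 ≤ w.im ∧ w ^ (β : ℂ) = r * exp (ψ * I) := by
  have hψβ : ψ * β⁻¹ ∈ Icc 0 (π / 2) := by
    refine ⟨by have := hψ.1; positivity, ?_⟩
    rw [mul_inv_le_iff₀ hβ]
    exact hψ.2
  have hπ := Real.pi_pos
  refine ⟨↑(r ^ β⁻¹) * exp (↑(ψ * β⁻¹) * I), ?_, ?_, ?_⟩
  · rw [re_ofReal_mul, exp_ofReal_mul_I_re]
    exact mul_nonneg (Real.rpow_nonneg hr _)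
      (Real.cos_nonneg_of_mem_Icc ⟨by linarith [hψβ.1], hψβ.2⟩)
  · rw [im_ofReal_mul, exp_ofReal_mul_I_im]
    exact mul_nonneg (Real.rpow_nonneg hr _)
      (Real.sin_nonneg_of_nonneg_of_le_pi hψβ.1 (by linarith [hψβ.2]))
  · rcases hr.eq_or_lt with rfl | hr
    · simp [Real.zero_rpow (inv_ne_zero hβ.ne'), zero_cpow (ofReal_ne_zero.2 hβ.ne')]
    · have hr' : 0 < r ^ β⁻¹ := Real.rpow_pos_of_pos hr _
      rw [cpow_ofReal_eq_polar, norm_ofReal_mul_exp_mul_I hr'.le,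
        arg_ofReal_mul_exp_mul_I hr' ⟨by linarith [hψβ.1], by linarith [hψβ.2]⟩,
        Real.rpow_inv_rpow hr.le hβ.ne', inv_mul_cancel_right₀ hβ.ne']

/-- Pulled back from `PhragmenLindelof.quadrant_I` along `w ↦ w ^ (2α/π)`. -/
theorem norm_le_of_sector {F : ℂ → ℂ} (hF : Differentiable ℂ F) {α c R K A M : ℝ}
    (hα : 0 < α) (hc : c < π / α)
    (hgrowth : ∀ r, R ≤ r → ∀ ψ ∈ Icc 0 α, ‖F (r * exp (ψ * I))‖ ≤ K * Real.exp (A * r ^ c))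
    (hre : ∀ r : ℝ, 0 ≤ r → ‖F r‖ ≤ M) (hα' : ∀ r : ℝ, 0 ≤ r → ‖F (r * exp (α * I))‖ ≤ M)
    {r ψ : ℝ} (hr : 0 ≤ r) (hψ : ψ ∈ Icc 0 α) : ‖F (r * exp (ψ * I))‖ ≤ M := by
  set β := 2 * α / π
  have hβ : 0 < β := by positivity
  have hβα : π / 2 * β = α := by simp only [β]; field_simp
  set G : ℂ → ℂ := fun w => F (w ^ (β : ℂ))
  have hG : ∀ w, G w = F (↑(‖w‖ ^ β) * exp (↑(arg w * β) * I)) := fun w => by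
    simp only [G, cpow_ofReal_eq_polar]
  have hgrowthG : ∃ c' < (2 : ℝ), ∃ B,
      G =O[Bornology.cobounded ℂ ⊓ 𝓟 (Ioi 0 ×ℂ Ioi 0)] fun w => Real.exp (B * ‖w‖ ^ c') := by
    refine ⟨β * c, ?_, A, Asymptotics.IsBigO.of_bound K ?_⟩
    · calc β * c < β * (π / α) := by gcongr
        _ = 2 := by rw [← hβα]; field_simp
    have hlarge : ∀ᶠ w in Bornology.cobounded ℂ, R ≤ ‖w‖ ^ β :=
      ((tendsto_rpow_atTop hβ).comp tendsto_norm_cobounded_atTop).eventually_ge_atTop R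
    rw [eventually_inf_principal]
    filter_upwards [hlarge] with w hwR hw
    rw [mem_reProdIm] at hw
    have harg : arg w * β ∈ Icc 0 α := by
      have h0 := arg_nonneg_iff.2 hw.2.le
      refine ⟨by positivity, hβα ▸ ?_⟩
      gcongr
      exact arg_le_pi_div_two_iff.2 (Or.inl hw.1.le)
    rw [hG, Real.norm_of_nonneg (Real.exp_pos _).le, Real.rpow_mul (norm_nonneg _)]
    exact hgrowth _ hwR _ harg
  have hreal : ∀ x : ℝ, 0 ≤ x → ‖G x‖ ≤ M := fun x hx => by
    simpa [G, ← ofReal_cpow hx] using hre _ (Real.rpow_nonneg hx β)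
  have himag : ∀ x : ℝ, 0 ≤ x → ‖G (x * I)‖ ≤ M := by
    intro x hx
    rcases hx.eq_or_lt with rfl | hx
    · simpa [G, zero_cpow (ofReal_ne_zero.2 hβ.ne')] using hre 0 le_rfl
    · rw [hG, norm_mul, norm_I, norm_real, Real.norm_of_nonneg hx.le, mul_one, arg_real_mul _ hx,
        arg_I, hβα]
      exact hα' _ (Real.rpow_nonneg hx.le _)
  obtain ⟨w, hwre, hwim, hw⟩ := exists_cpow_eq_of_mem_sector hβ hr (hβα.symm ▸ hψ)
  simpa only [G, hw] using PhragmenLindelof.quadrant_I (diffContOnCl_comp_cpow hF hβ) hgrowthG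
    hreal himag hwre hwim

lemma tendsto_neg_mul_pow_seven_add_mul_pow_five {a : ℝ} (ha : 0 < a) (A : ℝ) :
    Tendsto (fun r : ℝ => -(a * r ^ 7) + A * r ^ 5) atTop atBot := by
  have h := (tendsto_pow_atTop (n := 5) (by norm_num)).atTop_mul_atBot₀
    (tendsto_atBot_add_const_left _ A (tendsto_neg_atTop_atBot.comp
      ((tendsto_pow_atTop (n := 2) (by norm_num)).const_mul_atTop ha)))
  refine h.congr fun r => ?_
  simp only [Function.comp_apply]
  ring

lemma norm_le_of_rot_invariant {F : ℂ → ℂ} (hrot : ∀ z, F (rot * z) = F z) {M : ℝ}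
    (hsector : ∀ r : ℝ, 0 ≤ r → ∀ ψ ∈ Icc 0 (π / 7), ‖F (r * exp (ψ * I))‖ ≤ M) (z : ℂ) :
    ‖F z‖ ≤ M := by
  obtain ⟨n, ψ, hψ, hz⟩ := exists_rot_zpow_mul_eq z
  rw [← apply_zpow_mul_eq rot_ne_zero hrot n z, hz]
  exact hsector _ (norm_nonneg z) ψ hψ

theorem eq_zero_of_rot_invariant {F : ℂ → ℂ} (hF : Differentiable ℂ F)
    (hrot : ∀ z, F (rot * z) = F z) {a K A R : ℝ} (ha : 0 < a) (hK : 0 ≤ K)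
    (hbound : ∀ r, R ≤ r → ∀ ψ ∈ Icc 0 (π / 7),
      ‖F (r * exp (ψ * I))‖ ≤ K * Real.exp (-(a * r ^ 7 * |Real.cos (7 * ψ)|) + A * r ^ 5)) :
    ∀ z, F z = 0 := by
  have hexponent := tendsto_neg_mul_pow_seven_add_mul_pow_five ha A
  have hray : ∀ r : ℝ, R ≤ r → ‖F r‖ ≤ K * Real.exp (-(a * r ^ 7) + A * r ^ 5) := fun r hr => by
    simpa using hbound r hr 0 ⟨le_rfl, by positivity⟩
  have hlim : Tendsto (fun r : ℝ => F r) atTop (𝓝 0) := by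
    refine squeeze_zero_norm' ((eventually_ge_atTop R).mono hray) ?_
    simpa using (Real.tendsto_exp_atBot.comp hexponent).const_mul K
  obtain ⟨r₀, hr₀⟩ := eventually_atTop.1
    ((hexponent.eventually_le_atBot 0).and (eventually_ge_atTop R))
  obtain ⟨M₀, hM₀⟩ := (isCompact_closedBall (0 : ℂ) r₀).exists_bound_of_continuousOn
    hF.continuous.continuousOn
  have hreal : ∀ x : ℝ, 0 ≤ x → ‖F x‖ ≤ max M₀ K := by
    intro x hx
    rcases le_total x r₀ with h | h
    · exact (hM₀ x (by simpa [abs_of_nonneg hx] using h)).trans (le_max_left _ _)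
    · obtain ⟨hneg, hR⟩ := hr₀ x h
      calc ‖F x‖ ≤ K * Real.exp (-(a * x ^ 7) + A * x ^ 5) := hray x hR
        _ ≤ K * 1 := by gcongr; exact Real.exp_le_one_iff.2 hneg
        _ ≤ max M₀ K := by rw [mul_one]; exact le_max_right _ _
  have hsector : ∀ r : ℝ, 0 ≤ r → ∀ ψ ∈ Icc 0 (π / 7), ‖F (r * exp (ψ * I))‖ ≤ max M₀ K := by
    intro r hr ψ hψ
    refine norm_le_of_sector hF (c := 5) (R := max R 0) (K := K) (A := A) (by positivity)
      (by field_simp; norm_num) (fun r hr ψ hψ => (hbound r (le_of_max_le_left hr) ψ hψ).trans ?_)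
      hreal (fun x hx => ?_) hr hψ
    · have hr0 := le_of_max_le_right hr
      rw [Real.rpow_ofNat]
      gcongr
      linarith [show 0 ≤ a * r ^ 7 * |Real.cos (7 * ψ)| by positivity]
    · rw [mul_comm, show exp (↑(π / 7) * I) = rot from rfl, hrot]
      exact hreal x hx
  have hbdd : Bornology.IsBounded (range F) := by
    refine isBounded_iff_forall_norm_le.2 ⟨max M₀ K, ?_⟩
    rintro _ ⟨z, rfl⟩
    exact norm_le_of_rot_invariant hrot hsector z
  intro z
  refine tendsto_nhds_unique (tendsto_const_nhds.congr fun x => ?_) hlim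
  exact hF.apply_eq_apply_of_bounded hbdd z x

lemma exists_eq_zero_of_prod_eq_zero {ι : Type*} {s : Finset ι} {g : ι → ℂ → ℂ}
    (hg : ∀ i ∈ s, Differentiable ℂ (g i)) (h : ∀ z, ∏ i ∈ s, g i z = 0) :
    ∃ i ∈ s, ∀ z, g i z = 0 := by
  by_contra! hne
  have hev : ∀ᶠ z in 𝓝[≠] (0 : ℂ), ∀ i ∈ s, g i z ≠ 0 := by
    refine (eventually_all_finset s).2 fun i hi => ?_
    by_contra hfreq
    obtain ⟨z, hz⟩ := hne i hi
    have hanalytic := analyticOnNhd_univ_iff_differentiable.2 (hg i hi)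
    exact hz (hanalytic.eqOn_zero_of_preconnected_of_frequently_eq_zero isPreconnected_univ
      (mem_univ 0) (by simpa [Filter.not_eventually] using hfreq) (mem_univ z))
  obtain ⟨z, hz⟩ := hev.exists
  exact Finset.prod_ne_zero_iff.2 hz (h z)

end EntireVanishing

open EntireVanishing in
/-- Proposition 6.5: an entire function bounded by
`C |μ|^{-3/4} exp(Re θ(μ))` off the cut `(-∞,0]`, where
`θ(μ) = c7 μ^{7/2} + c5 μ^{5/2} + c3 μ^{3/2} + c1 μ^{1/2}` with `c7 > 0`,
vanishes identically. -/
theorem entire_function_vanishes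
    (c7 c5 c3 c1 : ℝ) (hc7 : 0 < c7)
    (f : ℂ → ℂ) (hf : Differentiable ℂ f)
    (C R : ℝ) (hC : 0 < C) (hR : 1 ≤ R)
    (hbound : ∀ μ : ℂ, μ ∉ (fun r : ℝ => (r : ℂ)) '' Iic 0 → R ≤ ‖μ‖ →
      ‖f μ‖ ≤ C * (‖μ‖) ^ (-(3 / 4) : ℝ) *
        Real.exp (((c7 : ℂ) * μ ^ ((7 : ℂ) / 2) + (c5 : ℂ) * μ ^ ((5 : ℂ) / 2)
          + (c3 : ℂ) * μ ^ ((3 : ℂ) / 2) + (c1 : ℂ) * μ ^ ((1 : ℂ) / 2)).re)) :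
    ∀ μ : ℂ, f μ = 0 := by
  have hright := fun z (hz : 0 ≤ z.re) (hzR : R ≤ ‖z‖) =>
    norm_comp_sq_le hf.continuous hR hbound hC.le hz hzR
  have hprod : ∀ z, rotProd f z = 0 :=
    eq_zero_of_rot_invariant (differentiable_rotProd hf) (rotProd_rot_mul f) hc7 (by positivity)
      fun r hr ψ hψ => norm_rotProd_le hright (by linarith) hr hψ
  obtain ⟨k, -, hk⟩ := exists_eq_zero_of_prod_eq_zero (s := Finset.range 7)
    (fun k _ => by fun_prop) hprod
  intro μ
  obtain ⟨w, rfl⟩ := IsAlgClosed.exists_pow_nat_eq μ two_pos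
  simpa [← mul_assoc, ← mul_pow, rot_ne_zero] using hk ((rot ^ k)⁻¹ * w)
end

section
/- (Diagonal identities for the left transformation kernel; used in the proofs of Lemmas 4.7 and 4.11.) Let ũ : ℝ → ℝ be continuous with compact support and let L : ℝ² → ℝ be continuously differentiable and satisfy, for all (x,y) ∈ ℝ², the integral equation L(x,y) = −∫_{−∞}^{(x+y)/2} ũ(s) ds − 2 ∫_{−∞}^{(x+y)/2} ( ∫_{0}^{(x−y)/2} ũ(α+β) L(α+β, α−β) dβ ) dα. Then for every x ∈ ℝ: (i) L(x,x) = −∫_{−∞}^{x} ũ(s) ds; (ii) (∂₁L + ∂₂L)(x,x) = −ũ(x). If moreover ũ is continuously differentiable and L is twice continuously differentiable, then also (iii) (∂₁∂₂L + ∂₂∂₂L)(x,x) = −(1/2) ũ'(x) − ũ(x) ∫_{−∞}^{x} ũ(s) ds. -/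
/-!
Put `F x = ∫_{-∞}^x ũ`. On the diagonal the integral equation collapses to `L(x,x) = -F x`,
so the derivative of `L` in direction `(1,1)` is `-ũ x`; this is (i) and (ii). Along the
anti-diagonal `t ↦ L(x+t, x-t)` only the inner integration limit moves, and differentiating
at `t = 0` gives `-2 ∫_{-∞}^x ũ(α) L(α,α) dα = 2 ∫_{-∞}^x ũ F = F(x)²`. Combining the two
directional derivatives yields `∂₂L(x,x) = -(ũ x + F(x)²)/2`, and (iii) is the derivative of
this identity along the diagonal, computed for `∂₂L` by the chain rule as in (ii).
-/

open MeasureTheory Set intervalIntegral Filter Topology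

section Cumulative

variable {u : ℝ → ℝ}

theorem hasDerivAt_integral_Iic (hu : Continuous u) (hi : Integrable u) (x : ℝ) :
    HasDerivAt (fun w => ∫ s in Iic w, u s) (u x) x := by
  have hsplit : (fun w => ∫ s in Iic w, u s) =
      fun w => (∫ s in Iic 0, u s) + ∫ s in (0 : ℝ)..w, u s := by
    ext w
    rw [← integral_Iic_sub_Iic hi.integrableOn hi.integrableOn, add_sub_cancel]
  rw [hsplit]
  exact (integral_hasDerivAt_right (hu.intervalIntegrable 0 x)
    (hu.stronglyMeasurableAtFilter _ _) hu.continuousAt).const_add _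

theorem norm_integral_Iic_le (hi : Integrable u) (w : ℝ) :
    ‖∫ s in Iic w, u s‖ ≤ ∫ s, ‖u s‖ :=
  (MeasureTheory.norm_integral_le_integral_norm _).trans
    (setIntegral_le_integral hi.norm (.of_forall fun _ => norm_nonneg _))

theorem integral_Iic_mul_integral_Iic (hu : Continuous u) (hi : Integrable u) (x : ℝ) :
    ∫ w in Iic x, u w * ∫ s in Iic w, u s = (∫ s in Iic x, u s) ^ 2 / 2 := by
  have hF := hasDerivAt_integral_Iic hu hi
  have hderiv : ∀ w ∈ Iic x,
      HasDerivAt (fun w => (∫ s in Iic w, u s) ^ 2 / 2) (u w * ∫ s in Iic w, u s) w :=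
    fun w _ => (((hF w).pow 2).div_const 2).congr_deriv (by push_cast; ring)
  have hint : Integrable (fun w => u w * ∫ s in Iic w, u s) :=
    hi.mul_bdd (continuous_iff_continuousAt.2 fun w => (hF w).continuousAt).aestronglyMeasurable
      (.of_forall (norm_integral_Iic_le hi))
  have hlim : Tendsto (fun w => (∫ s in Iic w, u s) ^ 2 / 2) atBot (𝓝 0) := by
    simpa using
      ((tendsto_integral_Iic_zero (f := u) (μ := volume) tendsto_id).pow 2).div_const (2 : ℝ)
  simpa using integral_Iic_of_hasDerivAt_of_tendsto' hderiv hint.integrableOn hlim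

end Cumulative

theorem hasDerivAt_integral_intervalIntegral_zero {E : Type*} [NormedAddCommGroup E]
    [NormedSpace ℝ E] [CompleteSpace E] {μ : Measure ℝ} [IsFiniteMeasureOnCompacts μ]
    {φ : ℝ × ℝ → E} (hφ : Continuous φ) {R : ℝ}
    (hR : ∀ α β : ℝ, |β| < 1 → R < |α| → φ (α, β) = 0) :
    HasDerivAt (fun t => ∫ α, (∫ β in (0 : ℝ)..t, φ (α, β)) ∂μ) (∫ α, φ (α, 0) ∂μ) 0 := by
  obtain ⟨C, hC⟩ := ((isCompact_closedBall (0 : ℝ) R).prod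
    (isCompact_closedBall (0 : ℝ) 1)).exists_bound_of_continuousOn hφ.continuousOn
  have hbound : ∀ α, ∀ t ∈ Metric.ball (0 : ℝ) 1,
      ‖φ (α, t)‖ ≤ (Metric.closedBall 0 R).indicator (fun _ => C) α := by
    intro α t ht
    by_cases hα : α ∈ Metric.closedBall 0 R
    · rw [indicator_of_mem hα]
      exact hC _ ⟨hα, Metric.ball_subset_closedBall ht⟩
    · rw [indicator_of_notMem hα, hR α t (by simpa using ht) (by simpa using hα), norm_zero]
  have hφα : ∀ α, Continuous fun β => φ (α, β) := fun α => hφ.comp (Continuous.prodMk_right α)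
  have hB : Integrable ((Metric.closedBall 0 R).indicator fun _ => C) μ :=
    (integrableOn_const measure_closedBall_lt_top.ne).integrable_indicator
      Metric.isClosed_closedBall.measurableSet
  have hF : ∀ t, AEStronglyMeasurable (fun α => ∫ β in (0 : ℝ)..t, φ (α, β)) μ := fun t =>
    (continuous_parametric_intervalIntegral_of_continuous' (f := fun α β => φ (α, β))
      hφ 0 t).aestronglyMeasurable
  have hdominated := _root_.hasDerivAt_integral_of_dominated_loc_of_deriv_le
    (μ := μ) (F := fun t α => ∫ β in (0 : ℝ)..t, φ (α, β)) (F' := fun t α => φ (α, t))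
    (Metric.ball_mem_nhds _ one_pos) (.of_forall hF) (by simp)
    (hφ.comp (Continuous.prodMk_left 0)).aestronglyMeasurable (.of_forall hbound) hB
    (.of_forall fun α t _ => integral_hasDerivAt_right ((hφα α).intervalIntegrable 0 t)
      ((hφα α).stronglyMeasurableAtFilter _ _) (hφα α).continuousAt)
  exact hdominated.2

section PartialDerivatives

variable {E : Type*} [NormedAddCommGroup E] [NormedSpace ℝ E] {f : ℝ × ℝ → E} {x y : ℝ}

theorem DifferentiableAt.hasDerivAt_partial_fst (hf : DifferentiableAt ℝ f (x, y)) :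
    HasDerivAt (fun x' => f (x', y)) (fderiv ℝ f (x, y) (1, 0)) x :=
  hf.hasFDerivAt.comp_hasDerivAt x ((hasDerivAt_id' x).prodMk (hasDerivAt_const x y))

theorem DifferentiableAt.hasDerivAt_partial_snd (hf : DifferentiableAt ℝ f (x, y)) :
    HasDerivAt (fun y' => f (x, y')) (fderiv ℝ f (x, y) (0, 1)) y :=
  hf.hasFDerivAt.comp_hasDerivAt y ((hasDerivAt_const y x).prodMk (hasDerivAt_id' y))

theorem DifferentiableAt.hasDerivAt_diag (hf : DifferentiableAt ℝ f (x, x)) :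
    HasDerivAt (fun w => f (w, w)) (fderiv ℝ f (x, x) (1, 1)) x :=
  hf.hasFDerivAt.comp_hasDerivAt (f := fun w => (w, w)) x
    ((hasDerivAt_id' x).prodMk (hasDerivAt_id' x))

theorem DifferentiableAt.hasDerivAt_antidiag (hf : DifferentiableAt ℝ f (x, x)) :
    HasDerivAt (fun t => f (x + t, x - t)) (fderiv ℝ f (x, x) (1, -1)) 0 := by
  have hpath : HasDerivAt (fun t : ℝ => (x + t, x - t)) ((1 : ℝ), (-1 : ℝ)) 0 :=
    ((hasDerivAt_id 0).const_add x).prodMk ((hasDerivAt_id 0).const_sub x)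
  have hf0 : DifferentiableAt ℝ f (x + 0, x - 0) := by simpa using hf
  simpa [Function.comp_def] using hf0.hasFDerivAt.comp_hasDerivAt 0 hpath

theorem DifferentiableAt.deriv_fst_add_deriv_snd_eq_of_hasDerivAt_diag {d : E}
    (hf : DifferentiableAt ℝ f (x, x)) (hd : HasDerivAt (fun w => f (w, w)) d x) :
    deriv (fun x' => f (x', x)) x + deriv (fun y' => f (x, y')) x = d := by
  rw [hf.hasDerivAt_partial_fst.deriv, hf.hasDerivAt_partial_snd.deriv, ← map_add,
    ← hf.hasDerivAt_diag.unique hd, Prod.mk_add_mk, add_zero, zero_add]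

theorem DifferentiableAt.deriv_snd_eq_of_hasDerivAt_diag_antidiag {a b : E}
    (hf : DifferentiableAt ℝ f (x, x)) (ha : HasDerivAt (fun w => f (w, w)) a x)
    (hb : HasDerivAt (fun t => f (x + t, x - t)) b 0) :
    deriv (fun y' => f (x, y')) x = (2 : ℝ)⁻¹ • (a - b) := by
  rw [hf.hasDerivAt_partial_snd.deriv, ← hf.hasDerivAt_diag.unique ha,
    ← hf.hasDerivAt_antidiag.unique hb, ← map_sub, ← map_smul]
  congr 1
  ext <;> norm_num

end PartialDerivatives

/-- The integral equation (4.11) for the left transformation kernel. -/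
def IsLeftKernel (u : ℝ → ℝ) (L : ℝ × ℝ → ℝ) : Prop :=
  ∀ x y : ℝ, L (x, y) =
    -(∫ s in Iic ((x + y) / 2), u s)
    - 2 * ∫ α in Iic ((x + y) / 2),
        (∫ β in (0 : ℝ)..((x - y) / 2), u (α + β) * L (α + β, α - β))

namespace IsLeftKernel

variable {u : ℝ → ℝ} {L : ℝ × ℝ → ℝ}

theorem apply_diag (h : IsLeftKernel u L) (x : ℝ) : L (x, x) = -∫ s in Iic x, u s := by
  simpa using h x x

theorem hasDerivAt_diag (h : IsLeftKernel u L) (hu : Continuous u) (hsupp : HasCompactSupport u)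
    (x : ℝ) : HasDerivAt (fun w => L (w, w)) (-u x) x := by
  simpa only [h.apply_diag] using
    (hasDerivAt_integral_Iic hu (hu.integrable_of_hasCompactSupport hsupp) x).fun_neg

theorem hasDerivAt_antidiag (h : IsLeftKernel u L) (hu : Continuous u)
    (hsupp : HasCompactSupport u) (hL : Continuous L) (x : ℝ) :
    HasDerivAt (fun t => L (x + t, x - t)) ((∫ s in Iic x, u s) ^ 2) 0 := by
  obtain ⟨R, hR⟩ := hsupp.isCompact.isBounded.subset_closedBall 0
  have hu0 : ∀ s, R < |s| → u s = 0 := fun s hs => image_eq_zero_of_notMem_tsupport fun hmem =>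
    not_le.2 hs (by simpa [Real.norm_eq_abs] using hR hmem)
  have hφ := hasDerivAt_integral_intervalIntegral_zero (μ := volume.restrict (Iic x))
    (φ := fun p => u (p.1 + p.2) * L (p.1 + p.2, p.1 - p.2)) (R := R + 1) (by fun_prop)
    fun α β hβ hα => by
      have := abs_sub_abs_le_abs_sub α (-β)
      rw [sub_neg_eq_add, abs_neg] at this
      simp [hu0 (α + β) (by linarith)]
  have hdiag : ∫ α in Iic x, u α * L (α, α) = -(∫ s in Iic x, u s) ^ 2 / 2 := by
    simp_rw [h.apply_diag, mul_neg, MeasureTheory.integral_neg,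
      integral_Iic_mul_integral_Iic hu (hu.integrable_of_hasCompactSupport hsupp), neg_div]
  have hanti : (fun t => L (x + t, x - t)) = fun t => -(∫ s in Iic x, u s) -
      2 * ∫ α in Iic x, ∫ β in (0 : ℝ)..t, u (α + β) * L (α + β, α - β) := by
    ext t
    rw [h, show (x + t + (x - t)) / 2 = x by ring, show (x + t - (x - t)) / 2 = t by ring]
  rw [hanti]
  refine ((hφ.const_mul 2).const_sub _).congr_deriv ?_
  simp only [add_zero, sub_zero, hdiag]
  ring

theorem deriv_snd_diag (h : IsLeftKernel u L) (hu : Continuous u) (hsupp : HasCompactSupport u)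
    (hL : Differentiable ℝ L) (x : ℝ) :
    deriv (fun y' => L (x, y')) x = -(u x + (∫ s in Iic x, u s) ^ 2) / 2 := by
  rw [(hL _).deriv_snd_eq_of_hasDerivAt_diag_antidiag (h.hasDerivAt_diag hu hsupp x)
    (h.hasDerivAt_antidiag hu hsupp hL.continuous x), smul_eq_mul]
  ring

end IsLeftKernel

/-- Diagonal identities for the left transformation kernel `L(x,y)`
satisfying the integral equation (4.11)
(used in the proofs of Lemmas 4.7 and 4.11). -/
theorem left_kernel_diagonal_identities
    (u : ℝ → ℝ) (hu : Continuous u) (hsupp : HasCompactSupport u)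
    (L : ℝ × ℝ → ℝ) (hL : ContDiff ℝ 1 L)
    (heq : ∀ x y : ℝ, L (x, y) =
      -(∫ s in Iic ((x + y) / 2), u s)
      - 2 * ∫ α in Iic ((x + y) / 2),
          (∫ β in (0 : ℝ)..((x - y) / 2), u (α + β) * L (α + β, α - β))) :
    (∀ x : ℝ, L (x, x) = -(∫ s in Iic x, u s)) ∧
    (∀ x : ℝ,
      deriv (fun x' => L (x', x)) x + deriv (fun y' => L (x, y')) x = -u x) ∧
    (ContDiff ℝ 1 u → ContDiff ℝ 2 L → ∀ x : ℝ,
      deriv (fun x' => deriv (fun y' => L (x', y')) x) x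
        + deriv (fun y' => deriv (fun y'' => L (x, y'')) y') x
      = -(1 / 2) * deriv u x - u x * ∫ s in Iic x, u s) := by
  have hker : IsLeftKernel u L := heq
  have hLd : Differentiable ℝ L := hL.differentiable one_ne_zero
  refine ⟨hker.apply_diag, fun x => (hLd _).deriv_fst_add_deriv_snd_eq_of_hasDerivAt_diag
    (hker.hasDerivAt_diag hu hsupp x), fun hu1 hL2 x => ?_⟩
  have hM : Differentiable ℝ fun p : ℝ × ℝ => deriv (fun y' => L (p.1, y')) p.2 := by
    rw [show (fun p : ℝ × ℝ => deriv (fun y' => L (p.1, y')) p.2) = fun p => fderiv ℝ L p (0, 1)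
      from funext fun p => (hLd p).hasDerivAt_partial_snd.deriv]
    exact ((hL2.fderiv_right one_add_one_eq_two.le).clm_apply contDiff_const).differentiable
      one_ne_zero
  have hMdiag : HasDerivAt (fun w => deriv (fun y' => L (w, y')) w)
      (-(1 / 2) * deriv u x - u x * ∫ s in Iic x, u s) x := by
    have hF := hasDerivAt_integral_Iic hu (hu.integrable_of_hasCompactSupport hsupp) x
    have hu' := (hu1.differentiable one_ne_zero x).hasDerivAt
    simp only [hker.deriv_snd_diag hu hsupp hLd]
    exact ((hu'.add (hF.pow 2)).neg.div_const 2).congr_deriv (by push_cast; ring)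
  exact (hM (x, x)).deriv_fst_add_deriv_snd_eq_of_hasDerivAt_diag hMdiag
end

section
/- (Diagonal identities for the right transformation kernel; used in the proofs of Lemmas 4.7 and 4.11.) Let ũ : ℝ → ℝ be continuous with compact support and let R : ℝ² → ℝ be continuously differentiable and satisfy, for all (x,y) ∈ ℝ², the integral equation R(x,y) = ∫_{(x+y)/2}^{+∞} ũ(s) ds − 2 ∫_{(x+y)/2}^{+∞} ( ∫_{0}^{(y−x)/2} ũ(α−β) R(α−β, α+β) dβ ) dα. Then for every x ∈ ℝ: (i) R(x,x) = ∫_{x}^{+∞} ũ(s) ds; (ii) (∂₁R + ∂₂R)(x,x) = −ũ(x). -/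
open MeasureTheory Set intervalIntegral

/-! On the diagonal `y = x` the inner integral of (4.11) runs over `[0, 0]`, which gives (i).
Differentiating (i) along the diagonal, the chain rule turns the left-hand side into
`(∂₁R + ∂₂R)(x, x)` and the right-hand side into `-ũ(x)`, which gives (ii). -/

theorem hasDerivAt_integral_Ici {E : Type*} [NormedAddCommGroup E] [NormedSpace ℝ E]
    [CompleteSpace E] {f : ℝ → E} {x : ℝ} (hf : Integrable f) (hx : ContinuousAt f x) :
    HasDerivAt (fun t => ∫ s in Ici t, f s) (-f x) x := by
  have htail : (fun t => ∫ s in Ici t, f s) = fun t => (∫ s in Ici x, f s) - ∫ s in x..t, f s :=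
    funext fun t => by rw [← integral_Ici_sub_Ici' hf.integrableOn hf.integrableOn, sub_sub_cancel]
  rw [htail]
  exact (integral_hasDerivAt_right hf.intervalIntegrable
    hf.aestronglyMeasurable.stronglyMeasurableAtFilter hx).const_sub _

theorem DifferentiableAt.deriv_add_deriv_eq_deriv_diag {𝕜 F : Type*} [NontriviallyNormedField 𝕜]
    [NormedAddCommGroup F] [NormedSpace 𝕜 F] {R : 𝕜 × 𝕜 → F} {x : 𝕜}
    (hR : DifferentiableAt 𝕜 R (x, x)) :
    deriv (fun t => R (t, x)) x + deriv (fun t => R (x, t)) x = deriv (fun t => R (t, t)) x := by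
  have hR' := hR.hasFDerivAt
  have h₁ : HasDerivAt (fun t => R (t, x)) _ x :=
    hR'.comp_hasDerivAt_of_eq x ((hasDerivAt_id x).prodMk (hasDerivAt_const x x)) rfl
  have h₂ : HasDerivAt (fun t => R (x, t)) _ x :=
    hR'.comp_hasDerivAt_of_eq x ((hasDerivAt_const x x).prodMk (hasDerivAt_id x)) rfl
  have hdiag : HasDerivAt (fun t => R (t, t)) _ x :=
    hR'.comp_hasDerivAt_of_eq x ((hasDerivAt_id x).prodMk (hasDerivAt_id x)) rfl
  rw [h₁.deriv, h₂.deriv, hdiag.deriv, ← map_add, Prod.mk_add_mk, add_zero, zero_add]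

/-- Diagonal identities for the right transformation kernel `R(x,y)`
satisfying the integral equation (4.11)
(used in the proofs of Lemmas 4.7 and 4.11). -/
theorem right_kernel_diagonal_identities
    (u : ℝ → ℝ) (hu : Continuous u) (hsupp : HasCompactSupport u)
    (R : ℝ × ℝ → ℝ) (hR : ContDiff ℝ 1 R)
    (heq : ∀ x y : ℝ, R (x, y) =
      (∫ s in Ici ((x + y) / 2), u s)
      - 2 * ∫ α in Ici ((x + y) / 2),
          (∫ β in (0 : ℝ)..((y - x) / 2), u (α - β) * R (α - β, α + β))) :
    (∀ x : ℝ, R (x, x) = ∫ s in Ici x, u s) ∧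
    (∀ x : ℝ,
      deriv (fun x' => R (x', x)) x + deriv (fun y' => R (x, y')) x = -u x) := by
  have hdiag : ∀ x : ℝ, R (x, x) = ∫ s in Ici x, u s := fun x => by
    simpa [add_self_div_two] using heq x x
  refine ⟨hdiag, fun x => ?_⟩
  rw [(hR.differentiable one_ne_zero (x, x)).deriv_add_deriv_eq_deriv_diag, funext hdiag]
  exact (hasDerivAt_integral_Ici (hu.integrable_of_hasCompactSupport hsupp) hu.continuousAt).deriv
end

section
/- (Expansion of the g-function at infinity, from the proof of Lemma 2.7.) Let t, x ∈ ℝ and let λ0 ∈ ℝ satisfy the cubic equation λ0³ − 24 t λ0 + 48 x = 0. Define, with principal branch powers, g(λ) = (1/105)(λ−λ0)^{7/2} + (λ0/30)(λ−λ0)^{5/2} + ((λ0² − 8t)/24)(λ−λ0)^{3/2} for λ with λ − λ0 ∉ (−∞,0], and θ(λ) = (1/105) λ^{7/2} − (t/3) λ^{3/2} + x λ^{1/2} for λ ∈ ℂ ∖ (−∞,0]. Let h1 = λ0⁴/128 − t λ0²/8. Then there exist constants C > 0 and R > |λ0| + 1 such that for every λ ∉ (−∞,0] with |λ| ≥ R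 one has | g(λ) − θ(λ) − h1 λ^{−1/2} | ≤ C |λ|^{−3/2}; that is, g(λ) − θ(λ) = h1/√λ + O(λ^{−3/2}) as λ → ∞ off the cut (−∞,0]. -/
/-!
Write `w = λ^{1/2}` and `s = (λ - λ0)^{1/2}`, so that `g = s · A(λ)` and `θ = w · B(λ)` for cubic
polynomials `A`, `B`. Since `λ` and `λ - λ0` have the same imaginary part, their principal square
roots lie in the same closed half-plane, so `u = s / w` is the square root of `1 - λ0/λ` with
nonnegative real part. Let `T` be the Taylor polynomial of degree four of `√(1 - z)`. The cubic
relation for `λ0` makes `T(λ0/λ) · λA(λ) - λB(λ) = h1 + O(λ⁻¹)`, while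
`u - T = (u² - T²) / (u + T) = O(λ⁻⁵)` because `|u + T| ≥ 1/2` for large `λ`, and
`λA(λ) = O(λ⁴)`. Hence `(g - θ - h1 λ^{-1/2}) · w = u λA(λ) - λB(λ) - h1 = O(λ⁻¹)`.
-/

open Complex Set Filter Asymptotics Bornology Topology

noncomputable section

namespace Complex

lemma cpow_one_half_sq (z : ℂ) : (z ^ (1 / 2 : ℂ)) ^ 2 = z := by
  simp [one_div, cpow_ofNat_inv_pow]

lemma cpow_ofNat_div_two (z : ℂ) (n : ℕ) [n.AtLeastTwo] :
    z ^ (OfNat.ofNat n / 2 : ℂ) = (z ^ (1 / 2 : ℂ)) ^ (OfNat.ofNat n : ℕ) := by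
  rw [← cpow_nat_mul, Nat.cast_ofNat, mul_one_div]

lemma re_cpow_one_half_div_nonneg {a b : ℂ} (h : 0 ≤ a.im ↔ 0 ≤ b.im) :
    0 ≤ (a ^ (1 / 2 : ℂ) / b ^ (1 / 2 : ℂ)).re := by
  rcases eq_or_ne a 0 with rfl | ha
  · simp
  rcases eq_or_ne b 0 with rfl | hb
  · simp
  rw [cpow_def_of_ne_zero ha, cpow_def_of_ne_zero hb, ← exp_sub, exp_re]
  have him : (log a * (1 / 2) - log b * (1 / 2)).im = (arg a - arg b) / 2 := by
    rw [← sub_mul, mul_one_div, div_ofNat_im, sub_im, log_im, log_im]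
  have hdiff : |arg a - arg b| ≤ Real.pi := by
    rw [abs_le]
    by_cases ha' : 0 ≤ a.im
    · have := arg_nonneg_iff.2 ha'
      have := arg_nonneg_iff.2 (h.1 ha')
      constructor <;> linarith [arg_le_pi a, arg_le_pi b]
    · have := arg_neg_iff.2 (not_le.1 ha')
      have := arg_neg_iff.2 (not_le.1 (mt h.2 ha'))
      constructor <;> linarith [neg_pi_lt_arg a, neg_pi_lt_arg b]
  rw [him]
  refine mul_nonneg (Real.exp_pos _).le (Real.cos_nonneg_of_mem_Icc ⟨?_, ?_⟩) <;>
    linarith [abs_le.1 hdiff]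

end Complex

def sqrtOneSubTaylor (z : ℂ) : ℂ := 1 - z / 2 - z ^ 2 / 8 - z ^ 3 / 16 - 5 * z ^ 4 / 128

def sqrtOneSubTaylorDefect (z : ℂ) : ℂ :=
  7 / 128 + 7 / 512 * z + 5 / 1024 * z ^ 2 + 25 / 16384 * z ^ 3

lemma sqrtOneSubTaylor_sq (z : ℂ) :
    sqrtOneSubTaylor z ^ 2 = 1 - z + z ^ 5 * sqrtOneSubTaylorDefect z := by
  unfold sqrtOneSubTaylor sqrtOneSubTaylorDefect; ring

lemma sub_sqrtOneSubTaylor_eq {u z : ℂ} (hu : u ^ 2 = 1 - z) (h : u + sqrtOneSubTaylor z ≠ 0) :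
    u - sqrtOneSubTaylor z = -(z ^ 5 * sqrtOneSubTaylorDefect z) / (u + sqrtOneSubTaylor z) := by
  rw [eq_div_iff h]
  linear_combination hu - sqrtOneSubTaylor_sq z

lemma half_le_norm_add {u v : ℂ} (hu : 0 ≤ u.re) (hv : ‖v - 1‖ ≤ 1 / 2) : 1 / 2 ≤ ‖u + v‖ := by
  have h1 : 1 ≤ ‖u + 1‖ := le_trans (by simpa using hu) (re_le_norm (u + 1))
  have h2 := norm_sub_norm_le (u + 1) (1 - v)
  rw [norm_sub_rev 1 v, show u + 1 - (1 - v) = u + v by ring] at h2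
  linarith

lemma exists_gt_forall_le_norm_of_eventually_cobounded {E : Type*} [NormedAddCommGroup E]
    {p : E → Prop} (h : ∀ᶠ x in cobounded E, p x) (r : ℝ) :
    ∃ R > r, ∀ x, R ≤ ‖x‖ → p x := by
  rw [← comap_norm_atTop, eventually_comap, eventually_atTop] at h
  obtain ⟨R, hR⟩ := h
  exact ⟨max R (r + 1), by linarith [le_max_right R (r + 1)],
    fun x hx => hR ‖x‖ (le_of_max_le_left hx) x rfl⟩

def gFunction (lam0 t lam : ℂ) : ℂ :=
  ((1 : ℂ) / 105) * (lam - lam0) ^ ((7 : ℂ) / 2) + (lam0 / 30) * (lam - lam0) ^ ((5 : ℂ) / 2)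
    + ((lam0 ^ 2 - 8 * t) / 24) * (lam - lam0) ^ ((3 : ℂ) / 2)

def theta (x t lam : ℂ) : ℂ :=
  ((1 : ℂ) / 105) * lam ^ ((7 : ℂ) / 2) - (t / 3) * lam ^ ((3 : ℂ) / 2) + x * lam ^ ((1 : ℂ) / 2)

def gPoly (lam0 t lam : ℂ) : ℂ :=
  (lam - lam0) ^ 3 / 105 + lam0 * (lam - lam0) ^ 2 / 30 + (lam0 ^ 2 - 8 * t) * (lam - lam0) / 24

def thetaPoly (x t lam : ℂ) : ℂ := lam ^ 3 / 105 - t * lam / 3 + x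

def gPolyReflect (lam0 t ζ : ℂ) : ℂ :=
  (1 - lam0 * ζ) ^ 3 / 105 + lam0 * ζ * (1 - lam0 * ζ) ^ 2 / 30
    + (lam0 ^ 2 - 8 * t) * ζ ^ 2 * (1 - lam0 * ζ) / 24

def gThetaTail (lam0 t ζ : ℂ) : ℂ :=
  (7 * lam0 ^ 5 / 3840 - lam0 ^ 3 * t / 48) + (lam0 ^ 6 / 1024 - lam0 ^ 4 * t / 128) * ζ
    + (5 * lam0 ^ 7 / 7168 - 5 * lam0 ^ 5 * t / 384) * ζ ^ 2

lemma gFunction_eq_mul_gPoly (lam0 t lam : ℂ) :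
    gFunction lam0 t lam = (lam - lam0) ^ (1 / 2 : ℂ) * gPoly lam0 t lam := by
  rw [gFunction, gPoly, cpow_ofNat_div_two, cpow_ofNat_div_two, cpow_ofNat_div_two]
  have hs := cpow_one_half_sq (lam - lam0)
  generalize (lam - lam0) ^ (1 / 2 : ℂ) = s at hs ⊢
  rw [← hs]
  ring

lemma theta_eq_mul_thetaPoly (x t lam : ℂ) :
    theta x t lam = lam ^ (1 / 2 : ℂ) * thetaPoly x t lam := by
  rw [theta, thetaPoly, cpow_ofNat_div_two, cpow_ofNat_div_two]
  have hw := cpow_one_half_sq lam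
  generalize lam ^ (1 / 2 : ℂ) = w at hw ⊢
  rw [← hw]
  ring

lemma gPoly_eq_pow_mul_reflect (lam0 t : ℂ) {lam : ℂ} (hlam : lam ≠ 0) :
    gPoly lam0 t lam = lam ^ 3 * gPolyReflect lam0 t lam⁻¹ := by
  unfold gPoly gPolyReflect
  field_simp

lemma sqrtOneSubTaylor_mul_gPoly_sub (lam0 t x : ℂ) (hx : x = t * lam0 / 2 - lam0 ^ 3 / 48)
    {lam : ℂ} (hlam : lam ≠ 0) :
    sqrtOneSubTaylor (lam0 * lam⁻¹) * lam * gPoly lam0 t lam - lam * thetaPoly x t lam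
      - (lam0 ^ 4 / 128 - t * lam0 ^ 2 / 8) = lam⁻¹ * gThetaTail lam0 t lam⁻¹ := by
  subst hx
  unfold sqrtOneSubTaylor gPoly thetaPoly gThetaTail
  field_simp
  ring

def sqrtRatio (lam0 lam : ℂ) : ℂ := (lam - lam0) ^ (1 / 2 : ℂ) / lam ^ (1 / 2 : ℂ)

def gRemainder (lam0 t lam : ℂ) : ℂ :=
  gThetaTail lam0 t lam⁻¹
    - lam0 ^ 5 * sqrtOneSubTaylorDefect (lam0 * lam⁻¹) * gPolyReflect lam0 t lam⁻¹
    / (sqrtRatio lam0 lam + sqrtOneSubTaylor (lam0 * lam⁻¹))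

lemma gFunction_sub_theta_eq (lam0 t x : ℂ) (hx : x = t * lam0 / 2 - lam0 ^ 3 / 48) {lam : ℂ}
    (hlam : lam ≠ 0) (hden : sqrtRatio lam0 lam + sqrtOneSubTaylor (lam0 * lam⁻¹) ≠ 0) :
    gFunction lam0 t lam - theta x t lam
        - (lam0 ^ 4 / 128 - t * lam0 ^ 2 / 8) * lam ^ (-(1 : ℂ) / 2)
      = lam ^ (-(3 : ℂ) / 2) * gRemainder lam0 t lam := by
  have hw := cpow_one_half_sq lam
  have hs := cpow_one_half_sq (lam - lam0)
  have hneg : lam ^ (-(1 : ℂ) / 2) = (lam ^ (1 / 2 : ℂ))⁻¹ := by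
    rw [neg_div, cpow_neg]
  have hneg3 : lam ^ (-(3 : ℂ) / 2) = lam⁻¹ * (lam ^ (1 / 2 : ℂ))⁻¹ := by
    rw [← hneg, ← cpow_neg_one, ← cpow_add _ _ hlam]
    norm_num
  rw [gFunction_eq_mul_gPoly, theta_eq_mul_thetaPoly, hneg, hneg3, gRemainder]
  rw [sqrtRatio] at hden ⊢
  generalize lam ^ (1 / 2 : ℂ) = w at hw hden ⊢
  generalize (lam - lam0) ^ (1 / 2 : ℂ) = s at hs hden ⊢
  have hw0 : w ≠ 0 := by rintro rfl; exact hlam (by simpa using hw.symm)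
  have hu : (s / w) ^ 2 = 1 - lam0 * lam⁻¹ := by
    rw [div_pow, hs, hw]; field_simp
  set T := sqrtOneSubTaylor (lam0 * lam⁻¹)
  set h1 := lam0 ^ 4 / 128 - t * lam0 ^ 2 / 8
  calc s * gPoly lam0 t lam - w * thetaPoly x t lam - h1 * w⁻¹
      = w⁻¹ * ((T * lam * gPoly lam0 t lam - lam * thetaPoly x t lam - h1)
          + (s / w - T) * lam * gPoly lam0 t lam) := by
        generalize gPoly lam0 t lam = A
        generalize thetaPoly x t lam = B
        rw [← hw]; field_simp; ring
    _ = w⁻¹ * (lam⁻¹ * gThetaTail lam0 t lam⁻¹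
          + -((lam0 * lam⁻¹) ^ 5 * sqrtOneSubTaylorDefect (lam0 * lam⁻¹)) / (s / w + T)
            * lam * (lam ^ 3 * gPolyReflect lam0 t lam⁻¹)) := by
      rw [sqrtOneSubTaylor_mul_gPoly_sub lam0 t x hx hlam, sub_sqrtOneSubTaylor_eq hu hden,
        gPoly_eq_pow_mul_reflect lam0 t hlam]
    _ = _ := by
      generalize gThetaTail lam0 t lam⁻¹ = P
      generalize sqrtOneSubTaylorDefect (lam0 * lam⁻¹) = D
      generalize gPolyReflect lam0 t lam⁻¹ = a
      field_simp
      ring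

lemma re_sqrtRatio_nonneg (lam0 : ℝ) (lam : ℂ) : 0 ≤ (sqrtRatio lam0 lam).re :=
  re_cpow_one_half_div_nonneg (by simp)

lemma eventually_half_le_norm_sqrtRatio_add (lam0 : ℝ) :
    ∀ᶠ lam in cobounded ℂ, 1 / 2 ≤ ‖sqrtRatio lam0 lam + sqrtOneSubTaylor (lam0 * lam⁻¹)‖ := by
  have hT : Tendsto (fun lam : ℂ => sqrtOneSubTaylor (lam0 * lam⁻¹)) (cobounded ℂ) (𝓝 1) := by
    have : Continuous fun ζ : ℂ => sqrtOneSubTaylor (lam0 * ζ) := by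
      unfold sqrtOneSubTaylor; fun_prop
    simpa [sqrtOneSubTaylor, Function.comp_def] using (this.tendsto 0).comp tendsto_inv₀_cobounded
  filter_upwards [hT.eventually (Metric.closedBall_mem_nhds 1 (by norm_num : (0 : ℝ) < 1 / 2))]
    with lam hlam
  exact half_le_norm_add (re_sqrtRatio_nonneg lam0 lam) (by simpa [dist_eq_norm] using hlam)

lemma gRemainder_isBigO_one (lam0 t : ℝ) :
    gRemainder lam0 t =O[cobounded ℂ] fun _ => (1 : ℝ) := by
  have hcomp (f : ℂ → ℂ) (hf : Continuous f) :
      (fun lam : ℂ => f lam⁻¹) =O[cobounded ℂ] fun _ => (1 : ℝ) :=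
    ((hf.tendsto 0).comp tendsto_inv₀_cobounded).isBigO_one ℝ
  have hinv : (fun lam => (sqrtRatio lam0 lam + sqrtOneSubTaylor (lam0 * lam⁻¹))⁻¹)
      =O[cobounded ℂ] fun _ => (1 : ℝ) := by
    refine IsBigO.of_bound 2 ?_
    filter_upwards [eventually_half_le_norm_sqrtRatio_add lam0] with lam h
    rw [norm_inv, norm_one, mul_one]
    exact inv_le_of_inv_le₀ (by norm_num) (by linarith)
  have hP := hcomp (gThetaTail lam0 t) (by unfold gThetaTail; fun_prop)
  have hQ := hcomp
    (fun ζ => (lam0 : ℂ) ^ 5 * sqrtOneSubTaylorDefect (lam0 * ζ) * gPolyReflect lam0 t ζ)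
    (by unfold sqrtOneSubTaylorDefect gPolyReflect; fun_prop)
  have hQinv := hQ.mul hinv
  simp only [mul_one] at hQinv
  simpa [gRemainder, div_eq_mul_inv] using hP.sub hQinv

theorem gFunction_sub_theta_isBigO (lam0 t x : ℝ) (hcubic : lam0 ^ 3 - 24 * t * lam0 + 48 * x = 0) :
    (fun lam : ℂ => gFunction lam0 t lam - theta x t lam
        - ((lam0 ^ 4 / 128 - t * lam0 ^ 2 / 8 : ℝ) : ℂ) * lam ^ (-(1 : ℂ) / 2))
      =O[cobounded ℂ] fun lam => ‖lam‖ ^ (-(3 / 2) : ℝ) := by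
  have hx : (x : ℂ) = t * lam0 / 2 - lam0 ^ 3 / 48 := by
    rw [show x = t * lam0 / 2 - lam0 ^ 3 / 48 by linarith]; push_cast; ring
  have hpow : (fun lam : ℂ => lam ^ (-(3 : ℂ) / 2))
      =O[cobounded ℂ] fun lam => ‖lam‖ ^ (-(3 / 2) : ℝ) := by
    refine IsBigO.of_bound 1 (Eventually.of_forall fun lam => ?_)
    rw [show (-(3 : ℂ) / 2) = ((-(3 / 2) : ℝ) : ℂ) by push_cast; ring, norm_cpow_real, one_mul]
    exact le_abs_self _
  refine (hpow.mul (gRemainder_isBigO_one lam0 t)).congr' ?_ (by simp)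
  filter_upwards [eventually_half_le_norm_sqrtRatio_add lam0, eventually_ne_cobounded 0]
    with lam hden hlam
  push_cast
  exact (gFunction_sub_theta_eq lam0 t x hx hlam (norm_pos_iff.1 (by linarith))).symm

end

/-- Expansion of the g-function of equation (2.7) at infinity
(from the proof of Lemma 2.7): if `λ0` is a real root of
`λ0³ - 24 t λ0 + 48 x = 0`, then `g(λ) - θ(λ) = h1/√λ + O(λ^{-3/2})`
as `λ → ∞` off the cut `(-∞,0]`, with `h1 = λ0⁴/128 - t λ0²/8`. -/
theorem g_function_expansion (lam0 t x : ℝ)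
    (hcubic : lam0 ^ 3 - 24 * t * lam0 + 48 * x = 0) :
    ∃ C > (0 : ℝ), ∃ R > |lam0| + 1, ∀ lam : ℂ,
      lam ∉ (fun r : ℝ => (r : ℂ)) '' Iic 0 → R ≤ ‖lam‖ →
      ‖((((1 : ℂ) / 105) * (lam - (lam0 : ℂ)) ^ ((7 : ℂ) / 2)
            + ((lam0 : ℂ) / 30) * (lam - (lam0 : ℂ)) ^ ((5 : ℂ) / 2)
            + (((lam0 : ℂ) ^ 2 - 8 * (t : ℂ)) / 24) * (lam - (lam0 : ℂ)) ^ ((3 : ℂ) / 2))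
          - (((1 : ℂ) / 105) * lam ^ ((7 : ℂ) / 2)
              - ((t : ℂ) / 3) * lam ^ ((3 : ℂ) / 2)
              + (x : ℂ) * lam ^ ((1 : ℂ) / 2))
          - ((lam0 ^ 4 / 128 - t * lam0 ^ 2 / 8 : ℝ) : ℂ) * lam ^ (-(1 : ℂ) / 2))‖
      ≤ C * ‖lam‖ ^ (-(3 / 2) : ℝ) := by
  obtain ⟨C, hC, hE⟩ := (gFunction_sub_theta_isBigO lam0 t x hcubic).exists_pos
  obtain ⟨R, hR, hbound⟩ := exists_gt_forall_le_norm_of_eventually_cobounded hE.bound (|lam0| + 1)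
  refine ⟨C, hC, R, hR, fun lam _ hlam => ?_⟩
  have h := hbound lam hlam
  rwa [Real.norm_of_nonneg (by positivity)] at h
end

section
/- (Explicit integral evaluation used in the Appendix in the derivation of the inverse Fourier transform.) For every c > 0 the improper integral ∫_{−∞}^{0} e^{iy} (e^{cy} − 1)/y dy converges (as the limit of ∫_{−T}^{0} when T → +∞) and equals (1/2) log(1 + c²) − i (π/2 − arctan(1/c)). -/
/-!
Writing `e^{iy} (e^{cy} - 1) / y = ∫_0^c e^{(t+i)y} dt` and exchanging the order of integration,
`∫_{-T}^0` of the integrand becomes `∫_0^c (1 - e^{-(t+i)T}) / (t+i) dt`. For `t > 0` the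
exponential decays as `T → ∞`, so by dominated convergence the limit is
`∫_0^c dt / (t+i) = log (c+i) - log i`, whose real and imaginary parts are read off from
`|c+i|² = 1 + c²` and `arg (c+i) = arctan (1/c)`.
-/

open Complex Filter intervalIntegral MeasureTheory
open scoped Interval

theorem intervalIntegral_integral_swap_of_continuous {E : Type*} [NormedAddCommGroup E]
    [NormedSpace ℝ E] {f : ℝ → ℝ → E} (hf : Continuous (Function.uncurry f)) (a b c d : ℝ) :
    ∫ x in a..b, ∫ y in c..d, f x y = ∫ y in c..d, ∫ x in a..b, f x y := by
  have hint : Integrable (Function.uncurry f)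
      ((volume.restrict (Ι a b)).prod (volume.restrict (Ι c d))) := by
    rw [Measure.prod_restrict, ← Measure.volume_eq_prod]
    exact (hf.continuousOn.integrableOn_compact (isCompact_uIcc.prod isCompact_uIcc)).mono_set
      (Set.prod_mono Set.uIoc_subset_uIcc Set.uIoc_subset_uIcc)
  simp only [intervalIntegral_eq_integral_uIoc, MeasureTheory.integral_smul]
  rw [integral_integral_swap hint, smul_comm]

theorem exp_mul_mul_exp_sub_one_div_eq_integral (z : ℂ) (c : ℝ) {y : ℝ} (hy : y ≠ 0) :
    exp (z * y) * (exp (c * y) - 1) / y = ∫ t in (0 : ℝ)..c, exp ((t + z) * y) := by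
  have hy' : (y : ℂ) ≠ 0 := ofReal_ne_zero.2 hy
  have hexp (t : ℝ) : exp ((t + z) * y) = exp (z * y) * exp (y * t) := by
    rw [← exp_add]; ring_nf
  simp only [hexp, intervalIntegral.integral_const_mul, integral_exp_mul_complex hy',
    ofReal_zero, mul_zero, exp_zero, mul_comm (y : ℂ) c]
  ring

theorem ofReal_add_mem_slitPlane {z : ℂ} (hz : z.im ≠ 0) (t : ℝ) : (t : ℂ) + z ∈ slitPlane :=
  mem_slitPlane_iff.2 (Or.inr (by simpa using hz))

theorem ofReal_add_ne_zero {z : ℂ} (hz : z.im ≠ 0) (t : ℝ) : (t : ℂ) + z ≠ 0 :=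
  slitPlane_ne_zero (ofReal_add_mem_slitPlane hz t)

theorem integral_inv_ofReal_add {z : ℂ} (hz : z.im ≠ 0) (a b : ℝ) :
    ∫ t in a..b, ((t : ℂ) + z)⁻¹ = log (b + z) - log (a + z) := by
  refine integral_eq_sub_of_hasDerivAt (f := fun t : ℝ => log (t + z)) (fun t _ => ?_) ?_
  · simpa using ((hasDerivAt_id (t : ℂ)).add_const z).clog (ofReal_add_mem_slitPlane hz t)
      |>.comp_ofReal
  · exact (Continuous.inv₀ (by fun_prop) (ofReal_add_ne_zero hz)).intervalIntegrable _ _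

theorem tendsto_exp_neg_mul_ofReal_atTop {w : ℂ} (hw : 0 < w.re) :
    Tendsto (fun T : ℝ => exp (-(w * T))) atTop (nhds 0) := by
  rw [tendsto_zero_iff_norm_tendsto_zero]
  simpa [norm_exp] using tendsto_id.const_mul_atTop hw

theorem tendsto_integral_one_sub_exp_neg_mul_div {z : ℂ} (hre : 0 ≤ z.re) (him : z.im ≠ 0)
    {c : ℝ} (hc : 0 ≤ c) :
    Tendsto (fun T : ℝ => ∫ t in (0 : ℝ)..c, (1 - exp (-((t + z) * T))) / (t + z)) atTop
      (nhds (∫ t in (0 : ℝ)..c, ((t : ℂ) + z)⁻¹)) := by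
  refine tendsto_integral_filter_of_dominated_convergence (fun _ => 2 / |z.im|)
    (.of_forall fun T => (Continuous.div (by fun_prop) (by fun_prop)
      (ofReal_add_ne_zero him)).aestronglyMeasurable)
    ?_ intervalIntegrable_const (.of_forall fun t ht => ?_)
  · filter_upwards [eventually_ge_atTop 0] with T hT
    refine .of_forall fun t ht => ?_
    rw [Set.uIoc_of_le hc] at ht
    have hexp : ‖exp (-((t + z) * T))‖ ≤ 1 := by
      rw [norm_exp, Real.exp_le_one_iff]
      simpa using mul_nonneg (add_nonneg ht.1.le hre) hT
    rw [norm_div]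
    gcongr
    · calc ‖1 - exp (-((t + z) * T))‖ ≤ ‖(1 : ℂ)‖ + ‖exp (-((t + z) * T))‖ := norm_sub_le _ _
        _ ≤ 2 := by rw [norm_one]; linarith
    · simpa using abs_im_le_norm ((t : ℂ) + z)
  · rw [Set.uIoc_of_le hc] at ht
    have hpos : 0 < ((t : ℂ) + z).re := by simpa using add_pos_of_pos_of_nonneg ht.1 hre
    simpa using ((tendsto_exp_neg_mul_ofReal_atTop hpos).const_sub 1).div_const ((t : ℂ) + z)

theorem log_ofReal_add_I {c : ℝ} (hc : 0 < c) :
    log (c + I) = ((1 / 2 * Real.log (1 + c ^ 2) : ℝ) : ℂ) + (Real.arctan (1 / c) : ℝ) * I := by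
  have harg : arg (c + I) = Real.arctan (1 / c) := by
    have hre : 0 < (c + I).re := by simpa using hc
    rw [← Real.arctan_tan (neg_pi_div_two_lt_arg_iff.2 (Or.inl hre))
      (arg_lt_pi_div_two_iff.2 (Or.inl hre)), tan_arg]
    simp
  have hnorm : Real.log ‖(c : ℂ) + I‖ = 1 / 2 * Real.log (1 + c ^ 2) := by
    have : normSq (c + I) = 1 + c ^ 2 := by simpa [add_comm, sq] using normSq_add_mul_I c 1
    rw [norm_def, Real.log_sqrt (normSq_nonneg _), this]
    ring
  apply Complex.ext <;> simp [-ofReal_arctan, log_re, log_im, hnorm, harg]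

/-- Explicit evaluation of the improper integral
`∫_{-∞}^{0} e^{iy} (e^{cy} - 1)/y dy = (1/2) log(1 + c²) - i(π/2 - arctan(1/c))`
for `c > 0` (used in the Appendix in the derivation of the inverse
Fourier transform). -/
theorem improper_integral_evaluation (c : ℝ) (hc : 0 < c) :
    Tendsto
      (fun T : ℝ =>
        ∫ y in (-T)..(0 : ℝ),
          Complex.exp (Complex.I * (y : ℂ)) *
            (Complex.exp ((c : ℂ) * (y : ℂ)) - 1) / (y : ℂ))
      atTop
      (nhds ((((1 / 2) * Real.log (1 + c ^ 2) : ℝ) : ℂ) -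
        Complex.I * ((Real.pi / 2 - Real.arctan (1 / c) : ℝ) : ℂ))) := by
  have hI : I.im ≠ 0 := by simp
  have hlimit : ∫ t in (0 : ℝ)..c, ((t : ℂ) + I)⁻¹ = (((1 / 2) * Real.log (1 + c ^ 2) : ℝ) : ℂ) -
      I * ((Real.pi / 2 - Real.arctan (1 / c) : ℝ) : ℂ) := by
    rw [integral_inv_ofReal_add hI, log_ofReal_add_I hc, ofReal_zero, zero_add, log_I]
    push_cast
    ring
  rw [← hlimit]
  refine (tendsto_integral_one_sub_exp_neg_mul_div (by simp) hI hc.le).congr fun T => ?_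
  calc ∫ t in (0 : ℝ)..c, (1 - exp (-((t + I) * T))) / (t + I)
      = ∫ t in (0 : ℝ)..c, ∫ y in (-T)..(0 : ℝ), exp ((t + I) * y) :=
        integral_congr fun t _ => by simp [integral_exp_mul_complex (ofReal_add_ne_zero hI t)]
    _ = ∫ y in (-T)..(0 : ℝ), ∫ t in (0 : ℝ)..c, exp ((t + I) * y) :=
        (intervalIntegral_integral_swap_of_continuous (by fun_prop) _ _ _ _).symm
    _ = ∫ y in (-T)..(0 : ℝ), exp (I * y) * (exp (c * y) - 1) / y :=
        integral_congr_ae <| (volume.ae_ne 0).mono fun y hy _ =>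
          (exp_mul_mul_exp_sub_one_div_eq_integral I c hy).symm
end
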